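/- arXiv:1610.08671 — 9 statements merged into one kernel-verified Lean document; each statement's English description precedes it below -/
import Mathlib

section
/- Let a₁, a₂, a₃ ∈ 𝔽[t] be nonzero polynomials and let f ∈ 𝔽[t] be a monic irreducible polynomial. If v_f(a₁) ≡ v_f(a₂) ≡ v_f(a₃) (mod 2), then the equation a₁x₁² + a₂x₂² + a₃x₃² = 0 has a nontrivial solution in the f-adic completion 𝔽_q(t)_(f). -/
open Polynomial IsDedekindDomain

/-- The height-one prime of `F[X]` generated by an irreducible polynomial `f`. -/
noncomputable def primeOfIrreducible {F : Type*} [Field F] {f : F[X]}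
    (hf : Irreducible f) : HeightOneSpectrum F[X] where
  asIdeal := Ideal.span {f}
  isPrime := (Ideal.span_singleton_prime hf.ne_zero).mpr hf.prime
  ne_bot := by simpa [Ideal.span_singleton_eq_bot] using hf.ne_zero

/-!
The exponents of `f` in the `aᵢ` having equal parity, rescaling each variable by a power of `f`
turns the form into `f ^ N` times `b₁x₁² + b₂x₂² + b₃x₃²` with `f`-adic units `bᵢ`. Over the
residue field, a finite field of odd characteristic, `b₁x₁² + b₂x₂² = -b₃` is solvable; lifting
the solution, `-(b₁p₁² + b₂p₂²) / b₃` is a principal unit of the completion, hence a square by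
Newton's iteration for the square root, which supplies `x₃`.
-/

open Filter Topology

namespace Valued

variable {R K Γ₀ : Type*} [LinearOrderedCommGroupWithZero Γ₀]

instance nonarchimedeanAddGroup [Ring R] [Valued R Γ₀] : NonarchimedeanAddGroup R where
  is_nonarchimedean U hU := by
    obtain ⟨γ, hγ⟩ := mem_nhds_zero.mp hU
    exact ⟨⟨v.restrict.ltAddSubgroup γ, isOpen_ball R γ.1⟩, hγ⟩

theorem tendsto_zero_of_le [Ring R] [Valued R Γ₀] {ι : Type*} {l : Filter ι} {a b : ι → R}
    (hb : Tendsto b l (𝓝 0)) (hab : ∀ i, v (a i) ≤ v (b i)) : Tendsto a l (𝓝 0) := by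
  rw [(hasBasis_nhds_zero R Γ₀).tendsto_right_iff] at hb ⊢
  intro γ _
  filter_upwards [hb γ trivial] with i hi
  simp only [Valuation.restrict_lt_iff_lt_embedding] at hi ⊢
  exact (hab i).trans_lt hi

variable [Field K] [Valued K Γ₀]

theorem newton_sq_step (h2 : v (2 : K) = 1) {c z : K} (hz : v (z - 1) < 1) :
    v (z - (z ^ 2 - c) / (2 * z) - z) = v (z ^ 2 - c) ∧
      v ((z - (z ^ 2 - c) / (2 * z)) ^ 2 - c) = v (z ^ 2 - c) ^ 2 := by
  have hvz : v z = 1 := by simpa using Valuation.map_one_add_of_lt v hz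
  have hz0 : z ≠ 0 := by rintro rfl; simp at hvz
  have h20 : (2 : K) ≠ 0 := by rintro h; simp [h] at h2
  constructor
  · rw [sub_sub_cancel_left, Valuation.map_neg, map_div₀, map_mul, h2, hvz, mul_one, div_one]
  · rw [show (z - (z ^ 2 - c) / (2 * z)) ^ 2 - c = ((z ^ 2 - c) / (2 * z)) ^ 2 by
      field_simp; ring]
    rw [map_pow, map_div₀, map_mul, h2, hvz, mul_one, div_one]

variable [MulArchimedean Γ₀] [CompleteSpace K]

theorem exists_sq_eq_one_add (h2 : v (2 : K) = 1) {w : K} (hw : v w < 1) :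
    ∃ z : K, z ^ 2 = 1 + w := by
  set c := 1 + w
  set z : ℕ → K := fun n ↦ (fun y ↦ y - (y ^ 2 - c) / (2 * y))^[n] 1
  have hzs (n : ℕ) : z (n + 1) = z n - (z n ^ 2 - c) / (2 * z n) :=
    Function.iterate_succ_apply' _ _ _
  have hpow {m n : ℕ} (h : m ≤ n) : v w ^ n ≤ v w ^ m := pow_le_pow_right_of_le_one' hw.le h
  have bounds (n : ℕ) : v (z n - 1) ≤ v w ∧ v (z n ^ 2 - c) ≤ v w ^ (n + 1) := by
    induction n with
    | zero => simp [z, c]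
    | succ n ih =>
      obtain ⟨hstep, hsq⟩ := newton_sq_step h2 (c := c) (ih.1.trans_lt hw)
      rw [← hzs] at hstep hsq
      constructor
      · rw [← sub_add_sub_cancel _ (z n)]
        refine (Valuation.map_add _ _ _).trans (max_le ?_ ih.1)
        exact hstep ▸ ih.2.trans ((hpow n.succ_pos).trans_eq (pow_one _))
      · calc v (z (n + 1) ^ 2 - c) = v (z n ^ 2 - c) ^ 2 := hsq
          _ ≤ (v w ^ (n + 1)) ^ 2 := pow_le_pow_left' ih.2 2
          _ ≤ v w ^ (n + 1 + 1) := by rw [← pow_mul]; exact hpow (by omega)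
  have hsmall : Tendsto (fun n ↦ w ^ (n + 1)) atTop (𝓝 0) :=
    (tendsto_zero_pow_of_v_lt_one hw).comp (tendsto_add_atTop_nat 1)
  have hcau : CauchySeq z := by
    refine NonarchimedeanAddGroup.cauchySeq_of_tendsto_sub_nhds_zero
      (tendsto_zero_of_le hsmall fun n ↦ ?_)
    rw [hzs, (newton_sq_step h2 ((bounds n).1.trans_lt hw)).1, map_pow]
    exact (bounds n).2
  obtain ⟨L, hL⟩ := cauchySeq_tendsto_of_complete hcau
  refine ⟨L, sub_eq_zero.mp (tendsto_nhds_unique ((hL.pow 2).sub_const c) ?_)⟩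
  exact tendsto_zero_of_le hsmall fun n ↦ (map_pow v w (n + 1)).symm ▸ (bounds n).2

theorem exists_add_mul_sq_eq_zero (h2 : v (2 : K) = 1) {s u : K} (hu : v u = 1)
    (hsu : v (s + u) < 1) : ∃ z : K, z ≠ 0 ∧ s + u * z ^ 2 = 0 := by
  have hu0 : u ≠ 0 := by rintro rfl; simp at hu
  have hw : v (-(s + u) / u) < 1 := by rwa [map_div₀, Valuation.map_neg, hu, div_one]
  obtain ⟨z, hz⟩ := exists_sq_eq_one_add h2 hw
  refine ⟨z, ?_, ?_⟩
  · rintro rfl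
    have := Valuation.map_one_add_of_lt v hw
    rw [← hz] at this
    simp at this
  · rw [hz]
    field_simp
    ring

end Valued

theorem FiniteField.exists_mul_sq_add_mul_sq_eq {K : Type*} [Field K] [Fintype K]
    (hK : ringChar K ≠ 2) {a b : K} (ha : a ≠ 0) (hb : b ≠ 0) (c : K) :
    ∃ x y : K, a * x ^ 2 + b * y ^ 2 = c := by
  have hdeg_a : (C a * X ^ 2).degree = 2 := degree_C_mul_X_pow 2 ha
  have hdeg_b : (C b * X ^ 2 - C c).degree = 2 := by
    rw [degree_sub_C (by rw [degree_C_mul_X_pow 2 hb]; norm_num), degree_C_mul_X_pow 2 hb]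
    rfl
  obtain ⟨x, y, hxy⟩ := exists_root_sum_quadratic hdeg_a hdeg_b (odd_card_of_char_ne_two hK)
  refine ⟨x, y, ?_⟩
  simp only [eval_mul, eval_sub, eval_pow, eval_C, eval_X] at hxy
  linear_combination hxy

theorem Polynomial.exists_dvd_mul_sq_add_mul_sq_add {F : Type*} [Field F] [Fintype F]
    (hF : ringChar F ≠ 2) {f b₁ b₂ : F[X]} (hf : Irreducible f) (hb₁ : ¬f ∣ b₁) (hb₂ : ¬f ∣ b₂)
    (b₃ : F[X]) : ∃ p₁ p₂ : F[X], f ∣ b₁ * p₁ ^ 2 + b₂ * p₂ ^ 2 + b₃ := by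
  have := Fact.mk hf
  have : Module.Finite F (AdjoinRoot f) := (AdjoinRoot.powerBasis hf.ne_zero).finite
  have : Finite (AdjoinRoot f) := Module.finite_of_finite F
  have : Fintype (AdjoinRoot f) := Fintype.ofFinite _
  have hchar : ringChar (AdjoinRoot f) ≠ 2 := Algebra.ringChar_eq F (AdjoinRoot f) ▸ hF
  obtain ⟨x, y, hxy⟩ := FiniteField.exists_mul_sq_add_mul_sq_eq hchar
    (mt AdjoinRoot.mk_eq_zero.mp hb₁) (mt AdjoinRoot.mk_eq_zero.mp hb₂) (-AdjoinRoot.mk f b₃)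
  obtain ⟨p₁, rfl⟩ := AdjoinRoot.mk_surjective x
  obtain ⟨p₂, rfl⟩ := AdjoinRoot.mk_surjective y
  refine ⟨p₁, p₂, AdjoinRoot.mk_eq_zero.mp ?_⟩
  simp only [map_add, map_mul, map_pow]
  linear_combination hxy

namespace IsDedekindDomain.HeightOneSpectrum

variable {R K : Type*} [CommRing R] [IsDedekindDomain R] [Field K] [Algebra R K]
  [IsFractionRing R K] (v : HeightOneSpectrum R)

theorem valued_algebraMap_adicCompletion (r : R) :
    Valued.v (algebraMap R (v.adicCompletion K) r) = v.intValuation r := by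
  rw [v.valuedAdicCompletion_eq_valuation, v.valuation_of_algebraMap]

theorem valued_algebraMap_adicCompletion_lt_one {r : R} (hr : r ∈ v.asIdeal) :
    Valued.v (algebraMap R (v.adicCompletion K) r) < 1 := by
  rwa [valued_algebraMap_adicCompletion, intValuation_lt_one_iff_mem]

theorem valued_algebraMap_adicCompletion_eq_one {r : R} (hr : r ∉ v.asIdeal) :
    Valued.v (algebraMap R (v.adicCompletion K) r) = 1 := by
  rw [valued_algebraMap_adicCompletion, intValuation_eq_one_iff_mem_primeCompl]
  exact hr

theorem valued_adicCompletion_two (h2 : IsUnit (2 : R)) :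
    Valued.v (2 : v.adicCompletion K) = 1 := by
  rw [← map_ofNat (algebraMap R (v.adicCompletion K)) 2]
  exact v.valued_algebraMap_adicCompletion_eq_one fun h ↦ v.isPrime.ne_top (Ideal.eq_top_of_isUnit_mem _ h h2)

theorem algebraMap_adicCompletion_ne_zero {r : R} (hr : r ≠ 0) :
    algebraMap R (v.adicCompletion K) r ≠ 0 := by
  rw [← Valuation.ne_zero_iff Valued.v, valued_algebraMap_adicCompletion]
  exact v.intValuation_ne_zero r hr

end IsDedekindDomain.HeightOneSpectrum

theorem ternary_isotropic_of_not_dvd {F : Type*} [Field F] [Fintype F] (hodd : ringChar F ≠ 2)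
    {f b₁ b₂ b₃ : F[X]} (hf : Irreducible f) (hb₁ : ¬f ∣ b₁) (hb₂ : ¬f ∣ b₂) (hb₃ : ¬f ∣ b₃) :
    ∃ y₁ y₂ y₃ : (primeOfIrreducible hf).adicCompletion (RatFunc F), y₃ ≠ 0 ∧
      algebraMap F[X] ((primeOfIrreducible hf).adicCompletion (RatFunc F)) b₁ * y₁ ^ 2 +
      algebraMap F[X] ((primeOfIrreducible hf).adicCompletion (RatFunc F)) b₂ * y₂ ^ 2 +
      algebraMap F[X] ((primeOfIrreducible hf).adicCompletion (RatFunc F)) b₃ * y₃ ^ 2 = 0 := by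
  set v := primeOfIrreducible hf
  set φ := algebraMap F[X] (v.adicCompletion (RatFunc F))
  obtain ⟨p₁, p₂, hdvd⟩ := exists_dvd_mul_sq_add_mul_sq_add hodd hf hb₁ hb₂ b₃
  have h2 : IsUnit (2 : F[X]) := by
    rw [← map_ofNat C 2]
    exact isUnit_C.mpr (Ring.two_ne_zero hodd).isUnit
  obtain ⟨z, hz0, hz⟩ := Valued.exists_add_mul_sq_eq_zero (v.valued_adicCompletion_two h2)
    (s := φ (b₁ * p₁ ^ 2 + b₂ * p₂ ^ 2))
    (v.valued_algebraMap_adicCompletion_eq_one (mt Ideal.mem_span_singleton.mp hb₃))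
    (map_add φ _ b₃ ▸ v.valued_algebraMap_adicCompletion_lt_one (Ideal.mem_span_singleton.mpr hdvd))
  refine ⟨φ p₁, φ p₂, z, hz0, ?_⟩
  simpa only [map_add, map_mul, map_pow] using hz

theorem ternary_isotropic_of_same_parity_general
    {F : Type*} [Field F] [Fintype F] (hodd : ringChar F ≠ 2)
    (a₁ a₂ a₃ f : F[X]) (ha₁ : a₁ ≠ 0) (ha₂ : a₂ ≠ 0) (ha₃ : a₃ ≠ 0)
    (hf : Irreducible f)
    (h12 : multiplicity f a₁ % 2 = multiplicity f a₂ % 2)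
    (h23 : multiplicity f a₂ % 2 = multiplicity f a₃ % 2) :
    ∃ x₁ x₂ x₃ : (primeOfIrreducible hf).adicCompletion (RatFunc F),
      (x₁, x₂, x₃) ≠ 0 ∧
      algebraMap F[X] ((primeOfIrreducible hf).adicCompletion (RatFunc F)) a₁ * x₁ ^ 2 +
      algebraMap F[X] ((primeOfIrreducible hf).adicCompletion (RatFunc F)) a₂ * x₂ ^ 2 +
      algebraMap F[X] ((primeOfIrreducible hf).adicCompletion (RatFunc F)) a₃ * x₃ ^ 2 = 0 := by
  set φ := algebraMap F[X] ((primeOfIrreducible hf).adicCompletion (RatFunc F))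
  have factor {a : F[X]} (ha : a ≠ 0) :=
    (FiniteMultiplicity.of_not_isUnit hf.not_isUnit ha).exists_eq_pow_mul_and_not_dvd
  obtain ⟨b₁, hb₁, hnd₁⟩ := factor ha₁
  obtain ⟨b₂, hb₂, hnd₂⟩ := factor ha₂
  obtain ⟨b₃, hb₃, hnd₃⟩ := factor ha₃
  obtain ⟨y₁, y₂, y₃, hy₃, hy⟩ := ternary_isotropic_of_not_dvd hodd hf hnd₁ hnd₂ hnd₃
  set N := max (multiplicity f a₁) (max (multiplicity f a₂) (multiplicity f a₃))
  have scale {a b : F[X]} {n k : ℕ} (y) (ha : a = f ^ n * b) (hN : n + 2 * k = N) :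
      φ a * (φ f ^ k * y) ^ 2 = φ f ^ N * (φ b * y ^ 2) := by
    rw [← hN, ha, map_mul, map_pow]
    ring
  have hf0 : φ f ≠ 0 := (primeOfIrreducible hf).algebraMap_adicCompletion_ne_zero hf.ne_zero
  refine ⟨φ f ^ ((N - multiplicity f a₁) / 2) * y₁, φ f ^ ((N - multiplicity f a₂) / 2) * y₂,
    φ f ^ ((N - multiplicity f a₃) / 2) * y₃, by simp [hf0, hy₃], ?_⟩
  rw [scale _ hb₁ (by omega), scale _ hb₂ (by omega), scale _ hb₃ (by omega), ← mul_add,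
    ← mul_add, hy, mul_zero]

/-- if the multiplicities of a monic irreducible `f` in the nonzero
polynomials `a₁, a₂, a₃` all have the same parity, then
`a₁x₁² + a₂x₂² + a₃x₃² = 0` has a nontrivial solution in the `f`-adic completion
of `𝔽_q(t)`. -/
theorem ternary_isotropic_of_same_parity
    {F : Type*} [Field F] [Fintype F] (hodd : ringChar F ≠ 2)
    (a₁ a₂ a₃ f : F[X]) (ha₁ : a₁ ≠ 0) (ha₂ : a₂ ≠ 0) (ha₃ : a₃ ≠ 0)
    (hfm : f.Monic) (hf : Irreducible f)
    (h12 : multiplicity f a₁ % 2 = multiplicity f a₂ % 2)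
    (h23 : multiplicity f a₂ % 2 = multiplicity f a₃ % 2) :
    ∃ x₁ x₂ x₃ : (primeOfIrreducible hf).adicCompletion (RatFunc F),
      (x₁, x₂, x₃) ≠ 0 ∧
      algebraMap F[X] ((primeOfIrreducible hf).adicCompletion (RatFunc F)) a₁ * x₁ ^ 2 +
      algebraMap F[X] ((primeOfIrreducible hf).adicCompletion (RatFunc F)) a₂ * x₂ ^ 2 +
      algebraMap F[X] ((primeOfIrreducible hf).adicCompletion (RatFunc F)) a₃ * x₃ ^ 2 = 0 :=
  ternary_isotropic_of_same_parity_general hodd a₁ a₂ a₃ f ha₁ ha₂ ha₃ hf h12 h23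
end

section
/- Let a₁, a₂, a₃ ∈ 𝔽[t] be nonzero polynomials. If the degrees of a₁, a₂, a₃ all have the same parity, then the equation a₁x₁² + a₂x₂² + a₃x₃² = 0 has a nontrivial solution in 𝔽((1/t)). -/
/-!
With `u = 1/t`, a nonzero polynomial `a` of degree `d` is `t^d` times the power series
`(reverse a)(u)`, a unit whose constant term is the leading coefficient of `a`. Since the degrees
have equal parity, rescaling `x_i` by `u^((d_i - d_3)/2)` turns the form into `t^(d_3)` times a
diagonal form with unit coefficients in `𝔽[[u]]`. Over the residue field `𝔽` such a form has a zero
with last coordinate `1`, since the sets `{c₁v²}` and `{-c₃ - c₂w²}` both have `(q+1)/2` elements;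
Hensel's lemma lifts it, the last coordinate being the square root of a power series with
constant term `1`.
-/

open Polynomial

/-- The embedding of `𝔽[t]` into `𝔽((1/t))`, sending `t` to the inverse of the
Laurent-series variable `u`. -/
noncomputable def polyToLaurentInfty (F : Type*) [Field F] : F[X] →+* LaurentSeries F :=
  (Polynomial.aeval ((HahnSeries.single (1 : ℤ) (1 : F) : LaurentSeries F)⁻¹)).toRingHom

theorem HenselianRing.isSquare_of_sub_one_mem {R : Type*} [CommRing R] {I : Ideal R}
    [HenselianRing R I] (h2 : IsUnit (2 : R)) {g : R} (hg : g - 1 ∈ I) : IsSquare g := by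
  have hroot : (X ^ 2 - C g).eval 1 ∈ I := by
    rw [eval_sub, eval_pow, eval_X, eval_C, one_pow, ← neg_sub]
    exact I.neg_mem hg
  have hsimple : IsUnit (Ideal.Quotient.mk I ((X ^ 2 - C g).derivative.eval 1)) := by
    convert h2.map (Ideal.Quotient.mk I) using 2
    simp [one_add_one_eq_two]
  obtain ⟨a, ha, -⟩ :=
    HenselianRing.is_henselian _ (monic_X_pow_sub_C g two_ne_zero) 1 hroot hsimple
  have ha' : a ^ 2 - g = 0 := by simpa using ha.eq_zero
  exact ⟨a, by rw [← sq, sub_eq_zero.mp ha']⟩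

theorem PowerSeries.isSquare_of_constantCoeff_eq_one {K : Type*} [Field K] (h2 : (2 : K) ≠ 0)
    {g : PowerSeries K} (hg : constantCoeff g = 1) : IsSquare g :=
  HenselianRing.isSquare_of_sub_one_mem (I := Ideal.span {X})
    (PowerSeries.isUnit_iff_constantCoeff.mpr (by rw [map_ofNat]; exact h2.isUnit))
    (Ideal.mem_span_singleton.mpr (X_dvd_iff.mpr (by simp [hg])))

theorem FiniteField.exists_mul_sq_add_mul_sq_add_eq_zero {K : Type*} [Field K] [Fintype K]
    (hK : ringChar K ≠ 2) {c₁ c₂ : K} (hc₁ : c₁ ≠ 0) (hc₂ : c₂ ≠ 0) (c₃ : K) :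
    ∃ v₁ v₂ : K, c₁ * v₁ ^ 2 + c₂ * v₂ ^ 2 + c₃ = 0 := by
  have hdeg₂ : (C c₂ * X ^ 2 : K[X]).degree = 2 := degree_C_mul_X_pow 2 hc₂
  obtain ⟨v₁, v₂, hv⟩ := exists_root_sum_quadratic (g := C c₂ * X ^ 2 + C c₃)
    (degree_C_mul_X_pow 2 hc₁) (by rw [degree_add_C (by rw [hdeg₂]; norm_num), hdeg₂])
    (odd_card_of_char_ne_two hK)
  exact ⟨v₁, v₂, by simpa [add_assoc] using hv⟩

theorem PowerSeries.exists_mul_sq_add_mul_sq_add_mul_sq_eq_zero {K : Type*} [Field K] [Fintype K]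
    (hK : ringChar K ≠ 2) {e₁ e₂ e₃ : PowerSeries K} (he₁ : constantCoeff e₁ ≠ 0)
    (he₂ : constantCoeff e₂ ≠ 0) (he₃ : constantCoeff e₃ ≠ 0) :
    ∃ y₁ y₂ y₃ : PowerSeries K, y₃ ≠ 0 ∧ e₁ * y₁ ^ 2 + e₂ * y₂ ^ 2 + e₃ * y₃ ^ 2 = 0 := by
  obtain ⟨v₁, v₂, hv⟩ :=
    FiniteField.exists_mul_sq_add_mul_sq_add_eq_zero hK he₁ he₂ (constantCoeff e₃)
  set s := e₁ * C v₁ ^ 2 + e₂ * C v₂ ^ 2 with hs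
  have hs₀ : constantCoeff s = -constantCoeff e₃ := by
    simp only [hs, map_add, map_mul, map_pow, constantCoeff_C]
    linear_combination hv
  have hg : constantCoeff (-s * e₃⁻¹) = 1 := by
    rw [map_mul, constantCoeff_inv, map_neg, hs₀, neg_neg, mul_inv_cancel₀ he₃]
  obtain ⟨h, hh⟩ := isSquare_of_constantCoeff_eq_one (Ring.two_ne_zero hK) hg
  refine ⟨C v₁, C v₂, h, ?_, ?_⟩
  · rintro rfl
    simp [hh] at hg
  · rw [sq h, ← hh, mul_left_comm, PowerSeries.mul_inv_cancel _ he₃]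
    ring

theorem eval₂_single_one_eq_ofPowerSeries {R : Type*} [CommRing R] (p : R[X]) :
    eval₂ (algebraMap R (LaurentSeries R)) (HahnSeries.single 1 1) p =
      HahnSeries.ofPowerSeries ℤ R (p : PowerSeries R) := by
  rw [← eval₂_C_X_eq_coe, hom_eval₂, HahnSeries.ofPowerSeries_X]
  congr 1

theorem polyToLaurentInfty_eq_single_mul_reverse {F : Type*} [Field F] (a : F[X]) :
    polyToLaurentInfty F a = HahnSeries.single (-(a.natDegree : ℤ)) 1 *
      HahnSeries.ofPowerSeries ℤ F (a.reverse : PowerSeries F) := by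
  let T : LaurentSeries F := HahnSeries.single (-1) 1
  have hT : polyToLaurentInfty F a = eval₂ (algebraMap F (LaurentSeries F)) T a := by
    simp [polyToLaurentInfty, aeval_def, HahnSeries.inv_single, T]
  let : Invertible T := ⟨HahnSeries.single 1 1, by simp [T, HahnSeries.single_mul_single],
    by simp [T, HahnSeries.single_mul_single]⟩
  rw [hT, ← eval₂_reverse_mul_pow, mul_comm]
  simp [T, HahnSeries.single_pow, eval₂_single_one_eq_ofPowerSeries]

theorem single_mul_ofPowerSeries_mul_sq {R : Type*} [CommRing R] (m k : ℤ) (e y : PowerSeries R) :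
    HahnSeries.single m 1 * HahnSeries.ofPowerSeries ℤ R e *
        (HahnSeries.single k 1 * HahnSeries.ofPowerSeries ℤ R y) ^ 2 =
      HahnSeries.single (m + 2 * k) 1 * HahnSeries.ofPowerSeries ℤ R (e * y ^ 2) := by
  have hsingle : HahnSeries.single (m + 2 * k) (1 : R) =
      HahnSeries.single m 1 * HahnSeries.single k 1 * HahnSeries.single k 1 := by
    rw [HahnSeries.single_mul_single, HahnSeries.single_mul_single, mul_one, mul_one, add_assoc,
      ← two_mul]
  rw [hsingle, map_mul, map_pow]
  ring

/-- if the degrees of the nonzero polynomials `a₁, a₂, a₃` all have the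
same parity, then `a₁x₁² + a₂x₂² + a₃x₃² = 0` has a nontrivial solution in `𝔽((1/t))`. -/
theorem ternary_isotropic_at_infinity_of_same_parity
    {F : Type*} [Field F] [Fintype F] (hodd : ringChar F ≠ 2)
    (a₁ a₂ a₃ : F[X]) (ha₁ : a₁ ≠ 0) (ha₂ : a₂ ≠ 0) (ha₃ : a₃ ≠ 0)
    (h12 : a₁.natDegree % 2 = a₂.natDegree % 2)
    (h23 : a₂.natDegree % 2 = a₃.natDegree % 2) :
    ∃ x₁ x₂ x₃ : LaurentSeries F,
      (x₁, x₂, x₃) ≠ 0 ∧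
      polyToLaurentInfty F a₁ * x₁ ^ 2 + polyToLaurentInfty F a₂ * x₂ ^ 2 +
        polyToLaurentInfty F a₃ * x₃ ^ 2 = 0 := by
  have hunit : ∀ a : F[X], a ≠ 0 → PowerSeries.constantCoeff (a.reverse : PowerSeries F) ≠ 0 :=
    fun a ha => by simpa [coeff_zero_reverse] using ha
  obtain ⟨y₁, y₂, y₃, hy₃, hy⟩ := PowerSeries.exists_mul_sq_add_mul_sq_add_mul_sq_eq_zero hodd
    (hunit a₁ ha₁) (hunit a₂ ha₂) (hunit a₃ ha₃)
  obtain ⟨k₁, hk₁⟩ : ∃ k : ℤ, -(a₁.natDegree : ℤ) + 2 * k = -a₃.natDegree :=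
    ⟨(a₁.natDegree - a₃.natDegree : ℤ) / 2, by omega⟩
  obtain ⟨k₂, hk₂⟩ : ∃ k : ℤ, -(a₂.natDegree : ℤ) + 2 * k = -a₃.natDegree :=
    ⟨(a₂.natDegree - a₃.natDegree : ℤ) / 2, by omega⟩
  refine ⟨HahnSeries.single k₁ 1 * HahnSeries.ofPowerSeries ℤ F y₁,
    HahnSeries.single k₂ 1 * HahnSeries.ofPowerSeries ℤ F y₂,
    HahnSeries.single 0 1 * HahnSeries.ofPowerSeries ℤ F y₃, ?_, ?_⟩
  · refine fun h0 => hy₃ ((map_eq_zero_iff _ (HahnSeries.ofPowerSeries_injective (Γ := ℤ))).mp ?_)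
    simpa using congrArg (·.2.2) h0
  · simp only [polyToLaurentInfty_eq_single_mul_reverse, single_mul_ofPowerSeries_mul_sq, hk₁, hk₂,
      mul_zero, add_zero, ← mul_add, ← map_add, hy, map_zero]
end

section
/- Let a₁, a₂, a₃ ∈ 𝔽[t] be nonzero polynomials. Assume that not all of the degrees of a₁, a₂, a₃ have the same parity, and let i ≠ j be indices with deg(aᵢ) ≡ deg(aⱼ) (mod 2). Let cᵢ and cⱼ be the leading coefficients of aᵢ and aⱼ respectively. Then the equation a₁x₁² + a₂x₂² + a₃x₃² = 0 has a nontrivial solution in 𝔽((1/t)) if and only if −cᵢcⱼ is a square in 𝔽. -/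
open Polynomial

namespace PowerSeries

variable {k : Type*} [Field k]

theorem isSquare_of_isSquare_constantCoeff (h2 : (2 : k) ≠ 0) {U : k⟦X⟧}
    (hU : constantCoeff U ≠ 0) (hsq : IsSquare (constantCoeff U)) : IsSquare U := by
  obtain ⟨e, he⟩ := hsq
  have he0 : e ≠ 0 := by rintro rfl; simp_all
  have happrox : (Polynomial.X ^ 2 - Polynomial.C U).eval (C e) ∈ Ideal.span {X} := by
    rw [Ideal.mem_span_singleton, X_dvd_iff]
    simp [he, sq]
  have hsimple : IsUnit ((Polynomial.X ^ 2 - Polynomial.C U).derivative.eval (C e)) := by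
    have h : (Polynomial.X ^ 2 - Polynomial.C U).derivative.eval (C e) = C (2 * e) := by
      simp [map_mul, one_add_one_eq_two, map_ofNat C 2]
    exact h ▸ (mul_ne_zero h2 he0).isUnit.map C
  obtain ⟨P, hP, -⟩ := HenselianRing.is_henselian _ (monic_X_pow_sub_C U two_ne_zero) _
    happrox (hsimple.map (Ideal.Quotient.mk _))
  exact ⟨P, by simpa [sub_eq_zero, sq, eq_comm] using hP⟩

end PowerSeries

namespace LaurentSeries

variable {k : Type*} [Field k]

open HahnSeries in
theorem isSquare_of_even_order (h2 : (2 : k) ≠ 0) {g : k⸨X⸩} (hg : g ≠ 0)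
    (heven : Even g.order) (hsq : IsSquare g.leadingCoeff) : IsSquare g := by
  have hcoeff : PowerSeries.constantCoeff g.powerSeriesPart = g.leadingCoeff := by
    rw [← PowerSeries.coeff_zero_eq_constantCoeff_apply, powerSeriesPart_coeff, Nat.cast_zero,
      add_zero, leadingCoeff_eq]
  obtain ⟨P, hP⟩ := PowerSeries.isSquare_of_isSquare_constantCoeff h2
    (hcoeff ▸ leadingCoeff_ne_zero.mpr hg) (hcoeff ▸ hsq)
  obtain ⟨m, hm⟩ := heven
  refine ⟨single m 1 * ofPowerSeries ℤ k P, ?_⟩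
  rw [← single_order_mul_powerSeriesPart g, hP, hm, map_mul,
    show (single (m + m) 1 : k⸨X⸩) = single m 1 * single m 1 by rw [single_mul_single, one_mul]]
  ring

end LaurentSeries

namespace HahnSeries

variable {Γ R : Type*} [LinearOrder Γ] [Zero Γ] [AddMonoid R]

theorem order_add_eq_min_of_leadingCoeff_add_ne_zero {u v : R⟦Γ⟧} (hu : u ≠ 0) (hv : v ≠ 0)
    (h : u.leadingCoeff + v.leadingCoeff ≠ 0) :
    u + v ≠ 0 ∧ (u + v).order = min u.order v.order := by
  have hcoeff : (u + v).coeff (min u.order v.order) ≠ 0 := by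
    rw [coeff_add]
    rcases lt_trichotomy u.order v.order with hlt | heq | hgt
    · rw [min_eq_left hlt.le, coeff_eq_zero_of_lt_order hlt, add_zero, ← leadingCoeff_eq]
      exact leadingCoeff_ne_zero.mpr hu
    · rwa [← heq, min_self, ← leadingCoeff_eq, heq, ← leadingCoeff_eq]
    · rw [min_eq_right hgt.le, coeff_eq_zero_of_lt_order hgt, zero_add, ← leadingCoeff_eq]
      exact leadingCoeff_ne_zero.mpr hv
  have hne := ne_zero_of_coeff_ne_zero hcoeff
  exact ⟨hne, le_antisymm (order_le_of_coeff_ne_zero hcoeff) (min_order_le_order_add hne)⟩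

theorem leadingCoeff_add_eq_zero_of_order_add_notMem (P : Set Γ) {u v : R⟦Γ⟧}
    (hu : u ≠ 0 → u.order ∈ P) (hv : v ≠ 0 → v.order ∈ P)
    (huv : u + v ≠ 0 → (u + v).order ∉ P) (hne : u ≠ 0 ∨ v ≠ 0) :
    u ≠ 0 ∧ v ≠ 0 ∧ u.leadingCoeff + v.leadingCoeff = 0 := by
  have hu0 : u ≠ 0 := by
    rintro rfl
    simp only [ne_eq, not_true_eq_false, false_or, zero_add] at hne huv
    exact huv hne (hv hne)
  have hv0 : v ≠ 0 := by
    rintro rfl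
    simp only [ne_eq, not_true_eq_false, or_false, add_zero] at hne huv
    exact huv hne (hu hne)
  refine ⟨hu0, hv0, by_contra fun h => ?_⟩
  obtain ⟨huv0, hmin⟩ := order_add_eq_min_of_leadingCoeff_add_ne_zero hu0 hv0 h
  refine huv huv0 ?_
  rcases min_choice u.order v.order with h' | h' <;> rw [hmin, h']
  exacts [hu hu0, hv hv0]

end HahnSeries

theorem Fin.eq_or_eq_or_eq_of_ne {i j k : Fin 3} (hij : i ≠ j) (hik : i ≠ k) (hjk : j ≠ k)
    (m : Fin 3) : m = i ∨ m = j ∨ m = k := by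
  omega

theorem Fin.exists_ne_ne_apply_ne {α : Type*} {p : Fin 3 → α} (hp : ¬(p 0 = p 1 ∧ p 1 = p 2))
    {i j : Fin 3} (hij : i ≠ j) (hpij : p i = p j) : ∃ k, i ≠ k ∧ j ≠ k ∧ p k ≠ p i := by
  by_contra! h
  apply hp
  fin_cases i <;> fin_cases j <;> simp_all

section polyToLaurentInfty

variable {F : Type*} [Field F]

theorem polyToLaurentInfty_monomial (n : ℕ) (c : F) :
    polyToLaurentInfty F (monomial n c) = HahnSeries.single (-n : ℤ) c := by
  have hinv : (HahnSeries.single (1 : ℤ) (1 : F) : LaurentSeries F)⁻¹ =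
      HahnSeries.single (-1) 1 :=
    inv_eq_of_mul_eq_one_right (by rw [HahnSeries.single_mul_single]; simp)
  simp [polyToLaurentInfty, hinv, HahnSeries.single_pow, LaurentSeries.algebraMap_apply,
    HahnSeries.C_apply, HahnSeries.single_mul_single]

theorem coeff_polyToLaurentInfty_neg_natCast (a : F[X]) (n : ℕ) :
    (polyToLaurentInfty F a).coeff (-n) = a.coeff n := by
  induction a using Polynomial.induction_on' with
  | add p q hp hq => simp [hp, hq]
  | monomial m c =>
    rw [polyToLaurentInfty_monomial, HahnSeries.coeff_single, coeff_monomial]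
    simp [eq_comm]

theorem polyToLaurentInfty_ne_zero {a : F[X]} (ha : a ≠ 0) : polyToLaurentInfty F a ≠ 0 :=
  HahnSeries.ne_zero_of_coeff_ne_zero (g := -a.natDegree) <| by
    rwa [coeff_polyToLaurentInfty_neg_natCast, coeff_natDegree, leadingCoeff_ne_zero]

theorem order_polyToLaurentInfty {a : F[X]} (ha : a ≠ 0) :
    (polyToLaurentInfty F a).order = -a.natDegree := by
  refine le_antisymm (HahnSeries.order_le_of_coeff_ne_zero ?_) ?_
  · rwa [coeff_polyToLaurentInfty_neg_natCast, coeff_natDegree, leadingCoeff_ne_zero]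
  · rw [HahnSeries.le_order_iff_forall (polyToLaurentInfty_ne_zero ha)]
    intro m hm
    obtain ⟨n, rfl⟩ : ∃ n : ℕ, m = -n := ⟨(-m).toNat, by omega⟩
    rw [coeff_polyToLaurentInfty_neg_natCast]
    exact coeff_eq_zero_of_natDegree_lt (by omega)

theorem leadingCoeff_polyToLaurentInfty (a : F[X]) :
    (polyToLaurentInfty F a).leadingCoeff = a.leadingCoeff := by
  rcases eq_or_ne a 0 with rfl | ha
  · simp
  · rw [HahnSeries.leadingCoeff_eq, order_polyToLaurentInfty ha,
      coeff_polyToLaurentInfty_neg_natCast, coeff_natDegree]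

theorem order_polyToLaurentInfty_mul_sq {a : F[X]} (ha : a ≠ 0) {x : LaurentSeries F}
    (hx : x ≠ 0) : (polyToLaurentInfty F a * x ^ 2).order = 2 * x.order - a.natDegree := by
  rw [HahnSeries.order_mul (polyToLaurentInfty_ne_zero ha) (pow_ne_zero 2 hx),
    HahnSeries.order_pow, order_polyToLaurentInfty ha, two_nsmul]
  ring

theorem leadingCoeff_polyToLaurentInfty_mul_sq (a : F[X]) (x : LaurentSeries F) :
    (polyToLaurentInfty F a * x ^ 2).leadingCoeff = a.leadingCoeff * x.leadingCoeff ^ 2 := by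
  simp [sq, leadingCoeff_polyToLaurentInfty]

theorem isSquare_neg_leadingCoeff_mul_of_isotropic {a b c : F[X]} (ha : a ≠ 0) (hb : b ≠ 0)
    (hc : c ≠ 0) (hab : a.natDegree % 2 = b.natDegree % 2)
    (hca : c.natDegree % 2 ≠ a.natDegree % 2) {x y z : LaurentSeries F}
    (hxyz : x ≠ 0 ∨ y ≠ 0 ∨ z ≠ 0)
    (h : polyToLaurentInfty F a * x ^ 2 + polyToLaurentInfty F b * y ^ 2 +
      polyToLaurentInfty F c * z ^ 2 = 0) :
    IsSquare (-(a.leadingCoeff * b.leadingCoeff)) := by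
  have hterm_ne : ∀ {p : F[X]} {s : LaurentSeries F}, p ≠ 0 →
      (polyToLaurentInfty F p * s ^ 2 ≠ 0 ↔ s ≠ 0) := by
    intro p s hp
    simp [polyToLaurentInfty_ne_zero hp]
  let P : Set ℤ := {n | n % 2 = a.natDegree % 2}
  have hterm_mem : ∀ {p : F[X]} {s : LaurentSeries F}, p ≠ 0 → s ≠ 0 →
      ((polyToLaurentInfty F p * s ^ 2).order ∈ P ↔ p.natDegree % 2 = a.natDegree % 2) := by
    intro p s hp hs
    simp only [P, Set.mem_ofPred_eq, order_polyToLaurentInfty_mul_sq hp hs]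
    omega
  have huv : polyToLaurentInfty F a * x ^ 2 + polyToLaurentInfty F b * y ^ 2 =
      -(polyToLaurentInfty F c * z ^ 2) := eq_neg_of_add_eq_zero_left h
  obtain ⟨hx, -, hlc⟩ := HahnSeries.leadingCoeff_add_eq_zero_of_order_add_notMem P
    (fun hu => (hterm_mem ha ((hterm_ne ha).mp hu)).mpr rfl)
    (fun hv => (hterm_mem hb ((hterm_ne hb).mp hv)).mpr hab.symm)
    (fun hw => by
      rw [huv, neg_ne_zero] at hw
      rwa [huv, HahnSeries.order_neg, hterm_mem hc ((hterm_ne hc).mp hw)])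
    (by
      by_contra! h0
      rw [h0.1, h0.2, add_zero, eq_comm, neg_eq_zero] at huv
      simp_all [polyToLaurentInfty_ne_zero])
  rw [leadingCoeff_polyToLaurentInfty_mul_sq, leadingCoeff_polyToLaurentInfty_mul_sq] at hlc
  have hξ : x.leadingCoeff ≠ 0 := HahnSeries.leadingCoeff_ne_zero.mpr ((hterm_ne ha).mp hx)
  refine ⟨b.leadingCoeff * y.leadingCoeff / x.leadingCoeff, ?_⟩
  field_simp
  linear_combination (-b.leadingCoeff) * hlc

theorem exists_polyToLaurentInfty_mul_sq_add_eq_zero (h2 : (2 : F) ≠ 0) {a b : F[X]}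
    (ha : a ≠ 0) (hb : b ≠ 0) (hab : a.natDegree % 2 = b.natDegree % 2)
    (hsq : IsSquare (-(a.leadingCoeff * b.leadingCoeff))) :
    ∃ x y : LaurentSeries F, x ≠ 0 ∧
      polyToLaurentInfty F a * x ^ 2 + polyToLaurentInfty F b * y ^ 2 = 0 := by
  have hab0 := mul_ne_zero (polyToLaurentInfty_ne_zero ha) (polyToLaurentInfty_ne_zero hb)
  obtain ⟨z, hz⟩ := LaurentSeries.isSquare_of_even_order h2 (neg_ne_zero.mpr hab0)
    (by
      rw [HahnSeries.order_neg, HahnSeries.order_mul (polyToLaurentInfty_ne_zero ha)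
        (polyToLaurentInfty_ne_zero hb), order_polyToLaurentInfty ha,
        order_polyToLaurentInfty hb, Int.even_iff]
      omega)
    (by simpa [HahnSeries.leadingCoeff_neg, leadingCoeff_polyToLaurentInfty] using hsq)
  refine ⟨polyToLaurentInfty F b, z, polyToLaurentInfty_ne_zero hb, ?_⟩
  rw [sq z, ← hz]
  ring

end polyToLaurentInfty

theorem ternary_isotropic_at_infinity_iff_of_mixed_parity_general
    {F : Type*} [Field F] (hodd : ringChar F ≠ 2)
    (a : Fin 3 → F[X]) (ha : ∀ m, a m ≠ 0)
    (hnot : ¬ ((a 0).natDegree % 2 = (a 1).natDegree % 2 ∧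
               (a 1).natDegree % 2 = (a 2).natDegree % 2))
    (i j : Fin 3) (hij : i ≠ j)
    (hpar : (a i).natDegree % 2 = (a j).natDegree % 2) :
    (∃ x : Fin 3 → LaurentSeries F,
        x ≠ 0 ∧ ∑ m, polyToLaurentInfty F (a m) * x m ^ 2 = 0) ↔
      IsSquare (-((a i).leadingCoeff * (a j).leadingCoeff)) := by
  obtain ⟨k, hik, hjk, hk⟩ :=
    Fin.exists_ne_ne_apply_ne (p := fun m => (a m).natDegree % 2) hnot hij hpar
  have hcases := Fin.eq_or_eq_or_eq_of_ne hij hik hjk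
  have hsum : ∀ f : Fin 3 → LaurentSeries F, ∑ m, f m = f i + f j + f k := by
    intro f
    rw [← Finset.eq_univ_of_forall (s := {i, j, k}) fun m => by simpa using hcases m,
      Finset.sum_insert (by simp [hij, hik]), Finset.sum_pair hjk, add_assoc]
  constructor
  · rintro ⟨x, hx, hx0⟩
    refine isSquare_neg_leadingCoeff_mul_of_isotropic (ha i) (ha j) (ha k) hpar hk ?_
      (by rwa [hsum] at hx0)
    contrapose! hx
    funext m
    rcases hcases m with rfl | rfl | rfl <;> simp [hx]
  · intro hsq
    obtain ⟨y, z, hy, hyz⟩ :=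
      exists_polyToLaurentInfty_mul_sq_add_eq_zero (Ring.two_ne_zero hodd) (ha i) (ha j) hpar hsq
    refine ⟨Pi.single i y + Pi.single j z, fun h => hy (by simpa [hij] using congrFun h i), ?_⟩
    simpa [hsum, Pi.single_apply, hij, hik, hjk, hij.symm, hik.symm, hjk.symm] using hyz

/-- if not all of the degrees of the nonzero polynomials `a₁, a₂, a₃` have
the same parity and `deg(aᵢ) ≡ deg(aⱼ) (mod 2)` for indices `i ≠ j`, then
`a₁x₁² + a₂x₂² + a₃x₃² = 0` has a nontrivial solution in `𝔽((1/t))` if and only if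
`−cᵢcⱼ` is a square in `𝔽`, where `cᵢ, cⱼ` are the leading coefficients of `aᵢ, aⱼ`. -/
theorem ternary_isotropic_at_infinity_iff_of_mixed_parity
    {F : Type*} [Field F] [Fintype F] (hodd : ringChar F ≠ 2)
    (a : Fin 3 → F[X]) (ha : ∀ m, a m ≠ 0)
    (hnot : ¬ ((a 0).natDegree % 2 = (a 1).natDegree % 2 ∧
               (a 1).natDegree % 2 = (a 2).natDegree % 2))
    (i j : Fin 3) (hij : i ≠ j)
    (hpar : (a i).natDegree % 2 = (a j).natDegree % 2) :
    (∃ x : Fin 3 → LaurentSeries F,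
        x ≠ 0 ∧ ∑ m, polyToLaurentInfty F (a m) * x m ^ 2 = 0) ↔
      IsSquare (-((a i).leadingCoeff * (a j).leadingCoeff)) :=
  ternary_isotropic_at_infinity_iff_of_mixed_parity_general hodd a ha hnot i j hij hpar
end

section
/- Let a₁, a₂, a₃, a₄ ∈ 𝔽[t] be nonzero polynomials. If three of the four coefficients have degrees of the same parity, then the equation a₁x₁² + a₂x₂² + a₃x₃² + a₄x₄² = 0 has a nontrivial solution in 𝔽((1/t)). -/
/-!
In `𝔽((1/t))` a polynomial `g` of degree `d` is `t^d · rev g (1/t)`, and `rev g` is a power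
series whose constant term is the leading coefficient `c` of `g`. In odd characteristic a power
series with constant term `1` is a square, so `g = c t^d` up to a nonzero square, and `t^d` only
matters through the parity of `d`. If `a_i, a_j, a_k` have degrees of the same parity `e`, the
form is therefore, up to squares, `t^e (c_i x_i² + c_j x_j² + c_k x_k²) + a_l x_l²`, and the
ternary form over the finite field `𝔽` has a nontrivial zero by Chevalley–Warning.
-/

open Polynomial

def DiagIsotropic {R ι : Type*} [CommSemiring R] [Fintype ι] (a : ι → R) : Prop :=
  ∃ x : ι → R, x ≠ 0 ∧ ∑ m, a m * x m ^ 2 = 0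

namespace DiagIsotropic

variable {R ι : Type*} [CommSemiring R] [Fintype ι]

theorem of_comp_injective {κ : Type*} [Fintype κ] {a : ι → R} {e : κ → ι}
    (he : Function.Injective e) (h : DiagIsotropic (a ∘ e)) : DiagIsotropic a := by
  classical
  obtain ⟨x, hx, hsum⟩ := h
  refine ⟨Function.extend e x 0, fun h0 => hx (funext fun n => ?_), ?_⟩
  · simpa [he.extend_apply] using congrFun h0 (e n)
  · rw [← hsum]
    refine (Fintype.sum_of_injective e he _ _ (fun m hm => ?_) fun n => ?_).symm
    · simp [Function.extend_apply' _ _ _ hm]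
    · simp [he.extend_apply]

theorem mul_right {a : ι → R} (h : DiagIsotropic a) (w : R) :
    DiagIsotropic (fun m => a m * w) := by
  obtain ⟨x, hx, hsum⟩ := h
  exact ⟨x, hx, by simp_rw [mul_right_comm _ w, ← Finset.sum_mul, hsum, zero_mul]⟩

theorem map {S : Type*} [CommSemiring S] {f : R →+* S} (hf : Function.Injective f)
    {a : ι → R} (h : DiagIsotropic a) : DiagIsotropic (fun m => f (a m)) := by
  obtain ⟨x, hx, hsum⟩ := h
  refine ⟨fun m => f (x m), fun h0 => hx (funext fun m => hf ?_), ?_⟩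
  · simpa using congrFun h0 m
  · simp [← map_pow, ← map_mul, ← map_sum, hsum]

theorem of_mul_sq [NoZeroDivisors R] {a b y : ι → R} (hy : ∀ m, y m ≠ 0)
    (hab : ∀ m, a m * y m ^ 2 = b m) (h : DiagIsotropic b) : DiagIsotropic a := by
  obtain ⟨x, hx, hsum⟩ := h
  refine ⟨fun m => y m * x m, fun h0 => hx (funext fun m => ?_), ?_⟩
  · exact (mul_eq_zero.mp (congrFun h0 m)).resolve_left (hy m)
  · simp_rw [← hab] at hsum
    rw [← hsum]
    exact Finset.sum_congr rfl fun m _ => by ring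

end DiagIsotropic

open MvPolynomial in
theorem FiniteField.diagIsotropic_of_two_lt_card {K ι : Type*} [Field K] [Fintype K]
    [Fintype ι] (c : ι → K) (hι : 2 < Fintype.card ι) : DiagIsotropic c := by
  classical
  set f : MvPolynomial ι K := ∑ m, MvPolynomial.C (c m) * MvPolynomial.X m ^ 2
  have hdeg : f.totalDegree < Fintype.card ι := by
    refine lt_of_le_of_lt ((totalDegree_finsetSum _ _).trans (Finset.sup_le fun m _ => ?_)) hι
    exact (totalDegree_mul _ _).trans (by simp [totalDegree_X_pow])
  -- the number of zeros of `f` is divisible by the characteristic, and `0` is one of them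
  have hdvd := char_dvd_card_solutions (ringChar K) hdeg
  have hcard : 1 < Fintype.card { x : ι → K // eval x f = 0 } := by
    have hpos : 0 < Fintype.card { x : ι → K // eval x f = 0 } :=
      Fintype.card_pos_iff.mpr ⟨⟨0, by simp [f]⟩⟩
    have hne : Fintype.card { x : ι → K // eval x f = 0 } ≠ 1 := fun h1 =>
      CharP.ringChar_ne_one (Nat.dvd_one.mp (h1 ▸ hdvd))
    omega
  obtain ⟨⟨x, hx⟩, hx0⟩ := Fintype.exists_ne_of_one_lt_card hcard ⟨0, by simp [f]⟩
  exact ⟨x, fun h => hx0 (Subtype.ext h), by simpa [f] using hx⟩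

namespace PowerSeries

variable {F : Type*} [Field F]

/-- Coefficients of the square root of a power series `p` with constant coefficient `1`:
`qₙ` is solved from `∑_{m ≤ n} qₘ qₙ₋ₘ = pₙ`, in which it occurs as `2 q₀ qₙ`. -/
noncomputable def sqrtCoeff (p : F⟦X⟧) : ℕ → F
  | 0 => 1
  | n + 1 =>
      (coeff (n + 1) p - ∑ m ∈ (Finset.Ioo 0 (n + 1)).attach,
        sqrtCoeff p m * sqrtCoeff p (n + 1 - m)) / 2
decreasing_by all_goals have := Finset.mem_Ioo.mp m.2; omega

theorem sqrtCoeff_succ (p : F⟦X⟧) (n : ℕ) :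
    sqrtCoeff p (n + 1) = (coeff (n + 1) p -
      ∑ m ∈ Finset.Ioo 0 (n + 1), sqrtCoeff p m * sqrtCoeff p (n + 1 - m)) / 2 := by
  rw [sqrtCoeff, Finset.sum_attach (Finset.Ioo 0 (n + 1)) fun m =>
    sqrtCoeff p m * sqrtCoeff p (n + 1 - m)]

theorem isSquare_of_constantCoeff_eq_one_s4 (h2 : (2 : F) ≠ 0) {p : F⟦X⟧}
    (hp : constantCoeff p = 1) : IsSquare p := by
  refine ⟨mk (sqrtCoeff p), ?_⟩
  ext n
  rw [coeff_mul, Finset.Nat.sum_antidiagonal_eq_sum_range_succ_mk]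
  cases n with
  | zero => simp [sqrtCoeff, hp]
  | succ n =>
    have hsplit : Finset.range (n + 2) = insert 0 (insert (n + 1) (Finset.Ioo 0 (n + 1))) := by
      ext m; simp only [Finset.mem_range, Finset.mem_insert, Finset.mem_Ioo]; omega
    rw [hsplit, Finset.sum_insert (by simp), Finset.sum_insert (by simp)]
    simp only [coeff_mk, Nat.sub_zero, Nat.sub_self, sqrtCoeff_succ, sqrtCoeff]
    field_simp
    ring

end PowerSeries

theorem HahnSeries.ofPowerSeries_coe_eq_aeval {R : Type*} [CommRing R] (P : R[X]) :
    ofPowerSeries ℤ R (P : PowerSeries R) = aeval (single (1 : ℤ) (1 : R)) P := by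
  change ((ofPowerSeries ℤ R).comp coeToPowerSeries.ringHom) P = (aeval _).toRingHom P
  congr 1
  refine Polynomial.ringHom_ext (fun c => ?_) ?_
  · simp [algebraMap_apply', PowerSeries.algebraMap_eq]
  · simp

section

variable {F : Type*} [Field F]

theorem polyToLaurentInfty_mul_single_natDegree (g : F[X]) :
    polyToLaurentInfty F g * HahnSeries.single (g.natDegree : ℤ) 1 =
      HahnSeries.ofPowerSeries ℤ F (g.reverse : PowerSeries F) := by
  set u : LaurentSeries F := HahnSeries.single (1 : ℤ) 1
  have hu : u ≠ 0 := HahnSeries.single_ne_zero one_ne_zero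
  let : Invertible u⁻¹ := invertibleOfNonzero (inv_ne_zero hu)
  have hrev := eval₂_reverse_mul_pow (algebraMap F (LaurentSeries F)) u⁻¹ g
  rw [invOf_eq_inv, inv_inv] at hrev
  have hpow : HahnSeries.single (g.natDegree : ℤ) (1 : F) = u ^ g.natDegree := by
    simp [u, HahnSeries.single_pow]
  rw [HahnSeries.ofPowerSeries_coe_eq_aeval, aeval_def, hpow]
  change eval₂ (algebraMap F (LaurentSeries F)) u⁻¹ g * _ =
    eval₂ (algebraMap F (LaurentSeries F)) u _
  rw [← hrev, mul_assoc, ← mul_pow, inv_mul_cancel₀ hu, one_pow, mul_one]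

theorem exists_polyToLaurentInfty_mul_sq_eq (h2 : (2 : F) ≠ 0) (g : F[X]) {d : ℕ}
    (hd : g.natDegree ≡ d [MOD 2]) :
    ∃ y : LaurentSeries F, y ≠ 0 ∧ polyToLaurentInfty F g * y ^ 2 =
      HahnSeries.C g.leadingCoeff * HahnSeries.single (-(d : ℤ)) 1 := by
  by_cases hg : g = 0
  · exact ⟨1, one_ne_zero, by simp [hg]⟩
  have hc : g.leadingCoeff ≠ 0 := leadingCoeff_ne_zero.mpr hg
  obtain ⟨q, hq⟩ := PowerSeries.isSquare_of_constantCoeff_eq_one_s4 h2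
    (p := PowerSeries.C g.leadingCoeff⁻¹ * g.reverse) (by simp [hc])
  set Q := HahnSeries.ofPowerSeries ℤ F q
  have hrev : (g.reverse : PowerSeries F) = PowerSeries.C g.leadingCoeff * (q * q) := by
    rw [← hq, ← mul_assoc, ← map_mul, mul_inv_cancel₀ hc, map_one, one_mul]
  have hQ : Q ≠ 0 := by
    refine (map_ne_zero_iff _ HahnSeries.ofPowerSeries_injective).mpr fun hq0 => hg ?_
    rwa [hq0, mul_zero, mul_zero, Polynomial.coe_eq_zero_iff, reverse_eq_zero] at hrev
  have hsq : polyToLaurentInfty F g * HahnSeries.single (g.natDegree : ℤ) 1 =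
      HahnSeries.C g.leadingCoeff * Q ^ 2 := by
    rw [polyToLaurentInfty_mul_single_natDegree, hrev, map_mul, HahnSeries.ofPowerSeries_C,
      pow_two, map_mul]
  obtain ⟨t, ht⟩ : ∃ t : ℤ, (g.natDegree : ℤ) = d + 2 * t :=
    ⟨((g.natDegree : ℤ) - d) / 2, by unfold Nat.ModEq at hd; omega⟩
  have hsplit : HahnSeries.single t (1 : F) ^ 2 =
      HahnSeries.single (g.natDegree : ℤ) 1 * HahnSeries.single (-(d : ℤ)) 1 := by
    rw [HahnSeries.single_pow, HahnSeries.single_mul_single, ht]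
    congr 1 <;> simp
  refine ⟨HahnSeries.single t 1 * Q⁻¹,
    mul_ne_zero (HahnSeries.single_ne_zero one_ne_zero) (inv_ne_zero hQ), ?_⟩
  calc polyToLaurentInfty F g * (HahnSeries.single t 1 * Q⁻¹) ^ 2
      = polyToLaurentInfty F g * HahnSeries.single (g.natDegree : ℤ) 1 *
          HahnSeries.single (-(d : ℤ)) 1 * Q⁻¹ ^ 2 := by
        rw [mul_pow, hsplit]; ring
    _ = _ := by rw [hsq]; field_simp

end

theorem quaternary_isotropic_at_infinity_of_three_same_parity_general
    {F : Type*} [Field F] [Fintype F] (hodd : ringChar F ≠ 2)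
    (a : Fin 4 → F[X])
    (i j k : Fin 4) (hij : i ≠ j) (hik : i ≠ k) (hjk : j ≠ k)
    (hpar₁ : (a i).natDegree % 2 = (a j).natDegree % 2)
    (hpar₂ : (a j).natDegree % 2 = (a k).natDegree % 2) :
    ∃ x : Fin 4 → LaurentSeries F,
      x ≠ 0 ∧ ∑ m, polyToLaurentInfty F (a m) * x m ^ 2 = 0 := by
  set e : Fin 3 → Fin 4 := ![i, j, k]
  have he : Function.Injective e := by
    intro m n h
    fin_cases m <;> fin_cases n <;> simp_all [e, eq_comm]
  have hpar : ∀ n, (a (e n)).natDegree ≡ (a i).natDegree [MOD 2] := by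
    intro n
    fin_cases n
    exacts [rfl, hpar₁.symm, (hpar₁.trans hpar₂).symm]
  choose y hy hya using fun n =>
    exists_polyToLaurentInfty_mul_sq_eq (Ring.two_ne_zero hodd) (a (e n)) (hpar n)
  have hlead := FiniteField.diagIsotropic_of_two_lt_card (fun n => (a (e n)).leadingCoeff)
    (by simp)
  exact DiagIsotropic.of_comp_injective he <| DiagIsotropic.of_mul_sq hy hya <|
    (hlead.map HahnSeries.C_injective).mul_right _

/-- if three of the four nonzero coefficients `a₁, a₂, a₃, a₄` have degrees
of the same parity, then `a₁x₁² + a₂x₂² + a₃x₃² + a₄x₄² = 0` has a nontrivial solution in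
`𝔽((1/t))`. -/
theorem quaternary_isotropic_at_infinity_of_three_same_parity
    {F : Type*} [Field F] [Fintype F] (hodd : ringChar F ≠ 2)
    (a : Fin 4 → F[X]) (ha : ∀ m, a m ≠ 0)
    (i j k : Fin 4) (hij : i ≠ j) (hik : i ≠ k) (hjk : j ≠ k)
    (hpar₁ : (a i).natDegree % 2 = (a j).natDegree % 2)
    (hpar₂ : (a j).natDegree % 2 = (a k).natDegree % 2) :
    ∃ x : Fin 4 → LaurentSeries F,
      x ≠ 0 ∧ ∑ m, polyToLaurentInfty F (a m) * x m ^ 2 = 0 :=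
  quaternary_isotropic_at_infinity_of_three_same_parity_general hodd a i j k hij hik hjk hpar₁ hpar₂
end

section
/- Let Q(x₁,…,x₅) = a₁x₁² + a₂x₂² + a₃x₃² + a₄x₄² + a₅x₅² be a diagonal quadratic form with nonzero coefficients aᵢ ∈ 𝔽[t]. Then there exist a diagonal quadratic form Q'(x₁,…,x₅) = b₁x₁² + ⋯ + b₅x₅² whose coefficients bᵢ ∈ 𝔽[t] are squarefree and whose determinant b₁b₂b₃b₄b₅ is cubefree, a nonzero g ∈ 𝔽_q(t), and an invertible 5×5 matrix M over 𝔽_q(t) such that g·Q(Mx) = Q'(x) for all x ∈ 𝔽_q(t)⁵. -/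
/-!
Write each `aᵢ = sᵢ rᵢ²` with `sᵢ` squarefree and absorb `rᵢ` into the variables. If an
irreducible `f` has `f³ ∣ s₀ ⋯ s₄`, then `f` divides at least three of the squarefree `sᵢ`.
Scaling the form by `f` and substituting `xᵢ ↦ xᵢ / f` for those `i` divides these coefficients
by `f` and multiplies the remaining (at most two) by `f`: the coefficients stay squarefree and
their product loses at least one factor `f`. Strict divisibility is well founded in `𝔽[t]`, so
this terminates.
-/

open Polynomial

section Squarefree

variable {R : Type*} [CommMonoidWithZero R]

theorem exists_squarefree_mul_sq_of_ne_zero [UniqueFactorizationMonoid R] {x : R} (hx : x ≠ 0) :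
    ∃ s r : R, Squarefree s ∧ x = s * r ^ 2 := by
  induction x using WfDvdMonoid.induction_on_irreducible with
  | zero => contradiction
  | unit u hu => exact ⟨u, 1, hu.squarefree, by simp⟩
  | mul z p hz hp ih =>
    obtain ⟨s, r, hs, rfl⟩ := ih (right_ne_zero_of_mul hx)
    by_cases hps : p ∣ s
    · obtain ⟨t, rfl⟩ := hps
      refine ⟨t, p * r, hs.of_mul_right, ?_⟩
      simp only [sq, mul_assoc, mul_left_comm]
    · refine ⟨p * s, r, ?_, mul_assoc p s _ |>.symm⟩
      exact squarefree_mul_iff.mpr ⟨hp.isRelPrime_iff_not_dvd.mpr hps, hp.squarefree, hs⟩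

theorem Squarefree.exists_eq_mul_not_dvd {x f : R} (hx : Squarefree x) (hf : Prime f) :
    ∃ t, ¬ f ∣ t ∧ (f ∣ x → x = f * t) ∧ (¬ f ∣ x → x = t) := by
  by_cases hfx : f ∣ x
  · obtain ⟨t, rfl⟩ := hfx
    refine ⟨t, fun ⟨u, hu⟩ => hf.not_isUnit (hx f ⟨u, by rw [hu, mul_assoc]⟩), fun _ => rfl,
      fun h => absurd (dvd_mul_right f t) h⟩
  · exact ⟨x, hfx, fun h => absurd h hfx, fun _ => rfl⟩

open Finset in
theorem exists_squarefree_dvdNotUnit_prod_of_prime_pow_dvd [UniqueFactorizationMonoid R]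
    {ι : Type*} [Fintype ι] {s : ι → R} (hs : ∀ m, Squarefree (s m)) {f : R} (hf : Prime f)
    (hdvd : f ^ (Fintype.card ι / 2 + 1) ∣ ∏ m, s m) :
    ∃ s' : ι → R, (∀ m, Squarefree (s' m)) ∧ DvdNotUnit (∏ m, s' m) (∏ m, s m) ∧
      ∀ m, s m = f * s' m ∨ s' m = f * s m := by
  classical
  choose t hft hs_dvd hs_ndvd using fun m => (hs m).exists_eq_mul_not_dvd hf
  set T : Finset ι := {m | f ∣ s m}
  set s' : ι → R := fun m => if f ∣ s m then t m else f * s m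
  have hprod_s : ∏ m, s m = f ^ #T * ∏ m, t m := by
    rw [← prod_const, prod_filter, ← prod_mul_distrib]
    refine prod_congr rfl fun m _ => ?_
    by_cases h : f ∣ s m
    · rw [if_pos h, ← hs_dvd m h]
    · rw [if_neg h, one_mul, ← hs_ndvd m h]
  have hprod_s' : ∏ m, s' m = f ^ #Tᶜ * ∏ m, t m := by
    simp only [s']
    rw [← prod_const, compl_filter, prod_filter, ← prod_mul_distrib]
    refine prod_congr rfl fun m _ => ?_
    by_cases h : f ∣ s m
    · rw [if_neg (not_not.2 h), one_mul, if_pos h]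
    · rw [if_pos h, if_neg h, ← hs_ndvd m h]
  have hcard : Fintype.card ι / 2 + 1 ≤ #T := by
    have hnd : ¬ f ∣ ∏ m, t m := by
      simpa [hf.dvd_finsetProd_iff] using hft
    rw [← pow_dvd_pow_iff hf.ne_zero hf.not_isUnit]
    exact hf.pow_dvd_of_dvd_mul_right _ hnd (hprod_s ▸ hdvd)
  have hcompl : #Tᶜ < #T := by
    rw [card_compl]; omega
  have : Nontrivial R := ⟨f, 0, hf.ne_zero⟩
  have hs'_sq : ∀ m, Squarefree (s' m) := fun m => by
    by_cases h : f ∣ s m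
    · rw [show s' m = t m from if_pos h]
      exact (hs_dvd m h ▸ hs m).of_mul_right
    · rw [show s' m = f * s m from if_neg h]
      exact squarefree_mul_iff.2
        ⟨hf.irreducible.isRelPrime_iff_not_dvd.2 h, hf.irreducible.squarefree, hs m⟩
  refine ⟨s', hs'_sq, ⟨prod_ne_zero_iff.2 fun m _ => (hs'_sq m).ne_zero, f ^ (#T - #Tᶜ), ?_, ?_⟩,
    fun m => ?_⟩
  · rw [isUnit_pow_iff_of_not_isUnit hf.not_isUnit]; omega
  · rw [hprod_s, hprod_s', mul_right_comm, ← pow_add, Nat.add_sub_cancel' hcompl.le]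
  · by_cases h : f ∣ s m
    · exact .inl (by rw [show s' m = t m from if_pos h, hs_dvd m h])
    · exact .inr (if_neg h)

end Squarefree

section DiagonalForm

variable {ι K : Type*} [Field K]

/-- `∑ v m * x m ^ 2` is `g * ∑ u m * x m ^ 2` after the substitution `x m ↦ c m * x m`,
for some `g ≠ 0` and nonzero `c m`. -/
def DiagonalFormEquiv (u v : ι → K) : Prop :=
  ∃ g : K, g ≠ 0 ∧ ∃ c : ι → K, (∀ m, c m ≠ 0) ∧ ∀ m, v m = g * u m * c m ^ 2

namespace DiagonalFormEquiv

theorem refl (u : ι → K) : DiagonalFormEquiv u u :=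
  ⟨1, one_ne_zero, 1, fun _ => one_ne_zero, fun m => by simp⟩

theorem trans {u v w : ι → K} (huv : DiagonalFormEquiv u v) (hvw : DiagonalFormEquiv v w) :
    DiagonalFormEquiv u w := by
  obtain ⟨g, hg, c, hc, huv⟩ := huv
  obtain ⟨g', hg', c', hc', hvw⟩ := hvw
  refine ⟨g' * g, mul_ne_zero hg' hg, c * c', fun m => mul_ne_zero (hc m) (hc' m), fun m => ?_⟩
  rw [hvw, huv, Pi.mul_apply]
  ring

theorem of_eq_mul_sq {u v r : ι → K} (hr : ∀ m, r m ≠ 0) (h : ∀ m, u m = v m * r m ^ 2) :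
    DiagonalFormEquiv u v := by
  refine ⟨1, one_ne_zero, fun m => (r m)⁻¹, fun m => inv_ne_zero (hr m), fun m => ?_⟩
  rw [h]
  field_simp [hr m]

theorem of_eq_mul_or_eq_mul {u v : ι → K} {f : K} (hf : f ≠ 0)
    (h : ∀ m, u m = f * v m ∨ v m = f * u m) : DiagonalFormEquiv u v := by
  classical
  refine ⟨f, hf, fun m => if u m = f * v m then f⁻¹ else 1,
    fun m => by dsimp only; split_ifs <;> simp [hf], fun m => ?_⟩
  dsimp only
  split_ifs with hm
  · rw [hm]
    field_simp
  · rw [(h m).resolve_left hm, one_pow, mul_one]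

theorem exists_matrix [Fintype ι] [DecidableEq ι] {u v : ι → K} (h : DiagonalFormEquiv u v) :
    ∃ (g : K) (M : Matrix ι ι K), g ≠ 0 ∧ IsUnit M ∧
      ∀ x : ι → K, g * ∑ m, u m * M.mulVec x m ^ 2 = ∑ m, v m * x m ^ 2 := by
  obtain ⟨g, hg, c, hc, huv⟩ := h
  refine ⟨g, Matrix.diagonal c, hg, ?_, fun x => ?_⟩
  · rw [Matrix.isUnit_iff_isUnit_det, Matrix.det_diagonal, isUnit_iff_ne_zero]
    exact Finset.prod_ne_zero_iff.2 fun m _ => hc m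
  · simp only [Finset.mul_sum, Matrix.mulVec_diagonal, huv]
    exact Finset.sum_congr rfl fun m _ => by ring

end DiagonalFormEquiv

end DiagonalForm

section Minimization

variable {R K ι : Type*} [CommRing R] [UniqueFactorizationMonoid R] [Field K] [Algebra R K]
  [FaithfulSMul R K] [Fintype ι]

theorem exists_diagonalFormEquiv_of_squarefree {s : ι → R} (hs : ∀ m, Squarefree (s m)) :
    ∃ b : ι → R, (∀ m, Squarefree (b m)) ∧
      (∀ f, Irreducible f → ¬ f ^ (Fintype.card ι / 2 + 1) ∣ ∏ m, b m) ∧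
      DiagonalFormEquiv (algebraMap R K ∘ s) (algebraMap R K ∘ b) := by
  induction hp : ∏ m, s m using WellFounded.induction (wellFounded_dvdNotUnit (α := R))
    generalizing s with
  | _ p ih =>
  by_cases hcube : ∀ f, Irreducible f → ¬ f ^ (Fintype.card ι / 2 + 1) ∣ ∏ m, s m
  · exact ⟨s, hs, hcube, .refl _⟩
  push Not at hcube
  obtain ⟨f, hf, hdvd⟩ := hcube
  have hinj := FaithfulSMul.algebraMap_injective R K
  obtain ⟨s', hs', hlt, hss'⟩ :=
    exists_squarefree_dvdNotUnit_prod_of_prime_pow_dvd hs hf.prime hdvd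
  obtain ⟨b, hb, hbcube, hs'b⟩ := ih _ (hp ▸ hlt) hs' rfl
  refine ⟨b, hb, hbcube, .trans ?_ hs'b⟩
  refine .of_eq_mul_or_eq_mul ((map_ne_zero_iff _ hinj).2 hf.ne_zero) fun m => ?_
  simpa only [Function.comp_apply, ← map_mul, hinj.eq_iff] using hss' m

theorem exists_diagonalFormEquiv_squarefree {a : ι → R} (ha : ∀ m, a m ≠ 0) :
    ∃ b : ι → R, (∀ m, Squarefree (b m)) ∧
      (∀ f, Irreducible f → ¬ f ^ (Fintype.card ι / 2 + 1) ∣ ∏ m, b m) ∧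
      DiagonalFormEquiv (algebraMap R K ∘ a) (algebraMap R K ∘ b) := by
  choose s r hs has using fun m => exists_squarefree_mul_sq_of_ne_zero (ha m)
  obtain ⟨b, hb, hbcube, hsb⟩ := exists_diagonalFormEquiv_of_squarefree (K := K) hs
  have hr : ∀ m, algebraMap R K (r m) ≠ 0 := fun m =>
    (map_ne_zero_iff _ (FaithfulSMul.algebraMap_injective R K)).2 fun h => ha m (by simp [has m, h])
  refine ⟨b, hb, hbcube, .trans (.of_eq_mul_sq hr fun m => ?_) hsb⟩
  simp only [Function.comp_apply, has m, map_mul, map_pow]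

end Minimization

theorem minimization_quinary_general
    {F : Type*} [Field F]
    (a : Fin 5 → F[X]) (ha : ∀ m, a m ≠ 0) :
    ∃ (b : Fin 5 → F[X]) (g : RatFunc F) (M : Matrix (Fin 5) (Fin 5) (RatFunc F)),
      (∀ m, Squarefree (b m)) ∧
      (∀ f : F[X], f.Monic → Irreducible f → ¬ f ^ 3 ∣ (b 0 * b 1 * b 2 * b 3 * b 4)) ∧
      g ≠ 0 ∧ IsUnit M ∧
      ∀ x : Fin 5 → RatFunc F,
        g * ∑ m, algebraMap F[X] (RatFunc F) (a m) * (M.mulVec x m) ^ 2 =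
          ∑ m, algebraMap F[X] (RatFunc F) (b m) * (x m) ^ 2 := by
  obtain ⟨b, hb, hcube, hab⟩ := exists_diagonalFormEquiv_squarefree (K := RatFunc F) ha
  obtain ⟨g, M, hg, hM, hform⟩ := hab.exists_matrix
  refine ⟨b, g, M, hb, fun f _ hf => ?_, hg, hM, hform⟩
  simpa only [Fin.prod_univ_five, Fintype.card_fin] using hcube f hf

/-- every diagonal quadratic form in 5 variables over `𝔽[t]` with nonzero
coefficients is projectively equivalent to a diagonal form with squarefree coefficients
whose determinant is cubefree. -/
theorem minimization_quinary
    {F : Type*} [Field F] [Fintype F] (hodd : ringChar F ≠ 2)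
    (a : Fin 5 → F[X]) (ha : ∀ m, a m ≠ 0) :
    ∃ (b : Fin 5 → F[X]) (g : RatFunc F) (M : Matrix (Fin 5) (Fin 5) (RatFunc F)),
      (∀ m, Squarefree (b m)) ∧
      (∀ f : F[X], f.Monic → Irreducible f → ¬ f ^ 3 ∣ (b 0 * b 1 * b 2 * b 3 * b 4)) ∧
      g ≠ 0 ∧ IsUnit M ∧
      ∀ x : Fin 5 → RatFunc F,
        g * ∑ m, algebraMap F[X] (RatFunc F) (a m) * (M.mulVec x m) ^ 2 =
          ∑ m, algebraMap F[X] (RatFunc F) (b m) * (x m) ^ 2 :=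
  minimization_quinary_general a ha
end

section
/- Let a₁, a₂, a₃, a₄, a₅ ∈ 𝔽_q(t) be nonzero. Then the equation a₁x₁² + a₂x₂² + a₃x₃² + a₄x₄² + a₅x₅² = 0 has a nontrivial solution (x₁,…,x₅) ∈ 𝔽_q(t)⁵. -/
/-!
Over a finite field `K`, a diagonal form `∑ b_i x_i^d` over `K[X]` in `n > d²` variables has a
nonzero zero: search for `x_i` of degree `≤ N := d D`, where `D` bounds the `deg b_i`. The
`D + d N + 1` coefficients of `∑ b_i x_i^d` are forms of degree `d` in the `n (N + 1)` coefficients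
of the `x_i`, and `d (D + d N + 1) < (d² + 1) (N + 1) ≤ n (N + 1)`, so Chevalley–Warning yields a
nontrivial common zero. Clearing denominators carries this over to `K(X)`; take `d = 2`, `n = 5`.
-/

open Polynomial

theorem MvPolynomial.exists_ne_zero_forall_eval_eq_zero_of_sum_lt {K σ ι : Type*} [Field K]
    [Fintype K] [Fintype σ] {s : Finset ι} {f : ι → MvPolynomial σ K}
    (hdeg : ∑ i ∈ s, (f i).totalDegree < Fintype.card σ)
    (hzero : ∀ i ∈ s, eval 0 (f i) = 0) :
    ∃ v ≠ 0, ∀ i ∈ s, eval v (f i) = 0 := by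
  classical
  have hp : (ringChar K).Prime := CharP.char_is_prime K _
  have hdvd := char_dvd_card_solutions_of_sum_lt (ringChar K) hdeg
  have hpos : 0 < Fintype.card { v : σ → K // ∀ i ∈ s, eval v (f i) = 0 } :=
    Fintype.card_pos_iff.mpr ⟨⟨0, hzero⟩⟩
  have hcard := hp.one_lt.trans_le (Nat.le_of_dvd hpos hdvd)
  obtain ⟨⟨v, hv⟩, hne⟩ := Fintype.exists_ne_of_one_lt_card hcard ⟨0, hzero⟩
  exact ⟨v, fun h => hne (Subtype.ext h), hv⟩

namespace Polynomial

section CoeffTotalDegree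

variable {R σ : Type*} [CommSemiring R]

theorem totalDegree_coeff_mul_le {p q : (MvPolynomial σ R)[X]} {a b : ℕ}
    (hp : ∀ k, (p.coeff k).totalDegree ≤ a) (hq : ∀ k, (q.coeff k).totalDegree ≤ b)
    (k : ℕ) : ((p * q).coeff k).totalDegree ≤ a + b := by
  rw [coeff_mul]
  exact MvPolynomial.totalDegree_finsetSum_le fun ij _ =>
    (MvPolynomial.totalDegree_mul _ _).trans (add_le_add (hp ij.1) (hq ij.2))

theorem totalDegree_coeff_pow_le {p : (MvPolynomial σ R)[X]} {a : ℕ}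
    (hp : ∀ k, (p.coeff k).totalDegree ≤ a) (n k : ℕ) :
    ((p ^ n).coeff k).totalDegree ≤ n * a := by
  induction n generalizing k with
  | zero => simp [coeff_one, apply_ite]
  | succ n ih => simpa [pow_succ, add_mul] using totalDegree_coeff_mul_le ih hp k

theorem totalDegree_coeff_map_C (p : R[X]) (k : ℕ) :
    ((p.map (MvPolynomial.C (σ := σ))).coeff k).totalDegree = 0 := by
  rw [coeff_map, MvPolynomial.totalDegree_C]

end CoeffTotalDegree

section GenericPoly

variable {R ι : Type*} [CommSemiring R] {N : ℕ}

variable (R) in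
noncomputable def genericPoly (N : ℕ) (i : ι) : (MvPolynomial (ι × Fin (N + 1)) R)[X] :=
  ∑ j : Fin (N + 1), monomial j (MvPolynomial.X (i, j))

theorem totalDegree_coeff_genericPoly_le (i : ι) (k : ℕ) :
    ((genericPoly R N i).coeff k).totalDegree ≤ 1 := by
  rw [genericPoly, finsetSum_coeff]
  refine MvPolynomial.totalDegree_finsetSum_le fun j _ => ?_
  rw [coeff_monomial]
  split_ifs
  · exact (MvPolynomial.totalDegree_monomial_le _ _).trans (by simp)
  · simp

theorem natDegree_genericPoly_le (i : ι) : (genericPoly R N i).natDegree ≤ N :=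
  natDegree_sum_le_of_forall_le _ _ fun j _ =>
    (natDegree_monomial_le _).trans (Nat.lt_succ_iff.mp j.isLt)

theorem genericPoly_map_eval (v : ι × Fin (N + 1) → R) (i : ι) :
    (genericPoly R N i).map (MvPolynomial.eval v) =
      ((degreeLTEquiv R (N + 1)).symm fun j => v (i, j) : R[X]) := by
  simp [genericPoly, degreeLTEquiv, Polynomial.map_sum]

end GenericPoly

section FiniteField

variable {K : Type*} [Field K] [Fintype K]

theorem exists_ne_zero_map_eval_eq_zero {σ : Type*} [Fintype σ] {Q : (MvPolynomial σ K)[X]}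
    {e : ℕ} (hdeg : ∀ k, (Q.coeff k).totalDegree ≤ e)
    (hcard : e * (Q.natDegree + 1) < Fintype.card σ)
    (hzero : Q.map (MvPolynomial.eval 0) = 0) :
    ∃ v ≠ 0, Q.map (MvPolynomial.eval v) = 0 := by
  have hzero' (k : ℕ) : MvPolynomial.eval 0 (Q.coeff k) = 0 := by
    simpa using congr(($hzero).coeff k)
  have hsum : ∑ k ∈ Finset.range (Q.natDegree + 1), (Q.coeff k).totalDegree <
      Fintype.card σ :=
    calc _ ≤ ∑ _k ∈ Finset.range (Q.natDegree + 1), e := Finset.sum_le_sum fun k _ => hdeg k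
      _ < Fintype.card σ := by simpa [mul_comm] using hcard
  obtain ⟨v, hv, hvQ⟩ :=
    MvPolynomial.exists_ne_zero_forall_eval_eq_zero_of_sum_lt hsum fun k _ => hzero' k
  refine ⟨v, hv, Polynomial.ext fun k => ?_⟩
  rw [coeff_map, coeff_zero]
  by_cases hk : k ≤ Q.natDegree
  · exact hvQ k (Finset.mem_range_succ_iff.mpr hk)
  · rw [coeff_eq_zero_of_natDegree_lt (not_le.mp hk), map_zero]

theorem exists_ne_zero_sum_mul_pow_eq_zero {ι : Type*} [Fintype ι] (b : ι → K[X]) {d : ℕ}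
    (hd : d ≠ 0) (hcard : d ^ 2 < Fintype.card ι) :
    ∃ x : ι → K[X], x ≠ 0 ∧ ∑ i, b i * x i ^ d = 0 := by
  classical
  set D := Finset.univ.sup fun i => (b i).natDegree
  set N := d * D
  let Q : (MvPolynomial (ι × Fin (N + 1)) K)[X] :=
    ∑ i, (b i).map MvPolynomial.C * genericPoly K N i ^ d
  let x (v : ι × Fin (N + 1) → K) (i : ι) : K[X] :=
    (degreeLTEquiv K (N + 1)).symm fun j => v (i, j)
  have hQ_map (v : ι × Fin (N + 1) → K) :
      Q.map (MvPolynomial.eval v) = ∑ i, b i * x v i ^ d := by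
    have hC : (MvPolynomial.eval v).comp MvPolynomial.C = RingHom.id K :=
      RingHom.ext fun _ => MvPolynomial.eval_C _
    simp [Q, x, Polynomial.map_sum, Polynomial.map_pow, genericPoly_map_eval, map_map, hC]
  have hQ_coeff (k : ℕ) : (Q.coeff k).totalDegree ≤ d := by
    rw [finsetSum_coeff]
    refine MvPolynomial.totalDegree_finsetSum_le fun i _ => ?_
    simpa using totalDegree_coeff_mul_le (fun k => (totalDegree_coeff_map_C (b i) k).le)
      (totalDegree_coeff_pow_le (totalDegree_coeff_genericPoly_le i) d) k
  have hQ_natDegree : Q.natDegree ≤ D + d * N :=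
    natDegree_sum_le_of_forall_le _ _ fun i _ => natDegree_mul_le.trans <| add_le_add
      (natDegree_map_le.trans (Finset.le_sup (f := fun i => (b i).natDegree) (Finset.mem_univ i)))
      (natDegree_pow_le.trans (Nat.mul_le_mul_left d (natDegree_genericPoly_le i)))
  have hcount : d * (Q.natDegree + 1) < Fintype.card (ι × Fin (N + 1)) := by
    have hd1 : 1 ≤ d := Nat.one_le_iff_ne_zero.mpr hd
    calc d * (Q.natDegree + 1) ≤ d * (D + d * N + 1) := by gcongr
      _ < (d ^ 2 + 1) * (N + 1) := by simp only [N]; nlinarith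
      _ ≤ Fintype.card (ι × Fin (N + 1)) := by
        simp only [Fintype.card_prod, Fintype.card_fin]
        gcongr
        omega
  have hzero : Q.map (MvPolynomial.eval 0) = 0 := by
    rw [hQ_map]
    simp [x, ← Pi.zero_def, zero_pow hd]
  obtain ⟨v, hv, hvQ⟩ := exists_ne_zero_map_eval_eq_zero hQ_coeff hcount hzero
  refine ⟨x v, fun hx => hv ?_, by rw [← hQ_map, hvQ]⟩
  ext ij
  have hi : (degreeLTEquiv K (N + 1)).symm (fun j => v (ij.1, j)) = 0 :=
    Subtype.ext (congr_fun hx ij.1)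
  simpa using congr_fun ((LinearEquiv.map_eq_zero_iff _).mp hi) ij.2

end FiniteField

end Polynomial

theorem IsFractionRing.exists_ne_zero_sum_mul_pow_eq_zero {A K ι : Type*} [CommRing A]
    [CommRing K] [Algebra A K] [IsFractionRing A K] [Fintype ι] {d : ℕ}
    (h : ∀ b : ι → A, ∃ y : ι → A, y ≠ 0 ∧ ∑ i, b i * y i ^ d = 0) (a : ι → K) :
    ∃ x : ι → K, x ≠ 0 ∧ ∑ i, a i * x i ^ d = 0 := by
  obtain ⟨c, hc⟩ := IsLocalization.exist_integer_multiples (nonZeroDivisors A) Finset.univ a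
  choose b hb using fun i => hc i (Finset.mem_univ i)
  obtain ⟨y, hy, hby⟩ := h b
  refine ⟨fun i => algebraMap A K (y i),
    fun hx => hy (funext fun i => IsFractionRing.injective A K ?_), ?_⟩
  · simpa using congr_fun hx i
  · refine (IsLocalization.map_units K c).mul_right_eq_zero.mp ?_
    calc algebraMap A K c * ∑ i, a i * algebraMap A K (y i) ^ d
        = algebraMap A K (∑ i, b i * y i ^ d) := by
          simp only [Finset.mul_sum, map_sum, map_mul, map_pow, hb, Algebra.smul_def, mul_assoc]
      _ = 0 := by rw [hby, map_zero]

theorem quinary_isotropic_over_ratFunc_general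
    {F : Type*} [Field F] [Fintype F]
    (a : Fin 5 → RatFunc F) :
    ∃ x : Fin 5 → RatFunc F, x ≠ 0 ∧ ∑ m, a m * x m ^ 2 = 0 :=
  IsFractionRing.exists_ne_zero_sum_mul_pow_eq_zero (A := F[X])
    (fun b => Polynomial.exists_ne_zero_sum_mul_pow_eq_zero b two_ne_zero (by simp)) a

/-- every diagonal quadratic form in 5 variables with nonzero coefficients
over `𝔽_q(t)` is isotropic. -/
theorem quinary_isotropic_over_ratFunc
    {F : Type*} [Field F] [Fintype F] (hodd : ringChar F ≠ 2)
    (a : Fin 5 → RatFunc F) (ha : ∀ m, a m ≠ 0) :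
    ∃ x : Fin 5 → RatFunc F, x ≠ 0 ∧ ∑ m, a m * x m ^ 2 = 0 :=
  quinary_isotropic_over_ratFunc_general a
end

section
/- Let F be a field of characteristic different from 2, d ∈ F, and let K be a field extension of F containing an element ρ with ρ² = d such that (1, ρ) is an F-basis of K. Let a, b, c ∈ F, and let B = H_K(a, b + cρ) be the quaternion algebra over K with generators i, j satisfying i² = a, j² = b + cρ, ij = −ji. For s₁, s₂, s₃, s₄ ∈ F, set w = (s₁ + s₂ρ)·j + (s₃ + s₄ρ)·(ij) ∈ B. Then w² lies in the image of algebraMap F B if and only if c·(s₁² + d·s₂²) + 2b·s₁s₂ − a·c·(s₃² + d·s₄²) − 2ab·s₃s₄ = 0. -/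
open scoped Quaternion

/-!
Since `j` and `ij` anticommute and square to `β` and `-aβ` (with `β = b + cρ`), an element
`x j + y ij` with `x, y ∈ K` squares to the scalar `(x² - a y²) β`. Here this scalar is `u + vρ ∈ K` with
`u, v ∈ F`, `v` being the displayed expression, and it lies in `F` exactly when `v = 0`
because `1, ρ` are `F`-linearly independent.
-/

namespace QuaternionAlgebra

theorem sq_smul_j_add_smul_ij {R : Type*} [CommRing R] {c₁ c₂ : R} (x y : R) :
    (x • (⟨0, 0, 1, 0⟩ : ℍ[R, c₁, c₂]) +
        y • ((⟨0, 1, 0, 0⟩ : ℍ[R, c₁, c₂]) * (⟨0, 0, 1, 0⟩ : ℍ[R, c₁, c₂]))) ^ 2 =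
      ↑((x ^ 2 - c₁ * y ^ 2) * c₂) := by
  ext <;> simp [pow_two] <;> ring

theorem coe_mem_range_algebraMap_iff {F K : Type*} [CommSemiring F] [CommRing K]
    [Algebra F K] {c₁ c₂ c₃ : K} (k : K) :
    (k : ℍ[K, c₁, c₂, c₃]) ∈ Set.range (algebraMap F ℍ[K, c₁, c₂, c₃]) ↔
      k ∈ Set.range (algebraMap F K) :=
  exists_congr fun _ ↦ coe_injective.eq_iff

end QuaternionAlgebra

theorem algebraMap_add_algebraMap_mul_mem_range_iff {F K : Type*} [CommRing F] [Ring K]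
    [Algebra F K] {ρ : K} (hρ : LinearIndependent F ![1, ρ]) (u v : F) :
    algebraMap F K u + algebraMap F K v * ρ ∈ Set.range (algebraMap F K) ↔ v = 0 := by
  refine ⟨fun ⟨r, hr⟩ ↦ ?_, fun hv ↦ ⟨u, by simp [hv]⟩⟩
  refine (LinearIndependent.pair_iff.mp hρ (u - r) v ?_).2
  rw [sub_smul, ← Algebra.algebraMap_eq_smul_one, ← Algebra.algebraMap_eq_smul_one,
    Algebra.smul_def, hr]
  abel

theorem square_in_base_iff_general
    {F K : Type*} [Field F] [Field K] [Algebra F K]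
    (d : F) (ρ : K) (hρ : ρ ^ 2 = algebraMap F K d)
    (bK : Module.Basis (Fin 2) F K) (hb0 : bK 0 = 1) (hb1 : bK 1 = ρ)
    (a b c : F) (s₁ s₂ s₃ s₄ : F) :
    (((algebraMap F K s₁ + algebraMap F K s₂ * ρ) •
        (⟨0, 0, 1, 0⟩ : ℍ[K, algebraMap F K a, algebraMap F K b + algebraMap F K c * ρ]) +
      (algebraMap F K s₃ + algebraMap F K s₄ * ρ) •
        ((⟨0, 1, 0, 0⟩ : ℍ[K, algebraMap F K a, algebraMap F K b + algebraMap F K c * ρ]) *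
          (⟨0, 0, 1, 0⟩ : ℍ[K, algebraMap F K a,
            algebraMap F K b + algebraMap F K c * ρ]))) ^ 2 ∈
      Set.range (algebraMap F
        ℍ[K, algebraMap F K a, algebraMap F K b + algebraMap F K c * ρ])) ↔
    c * (s₁ ^ 2 + d * s₂ ^ 2) + 2 * b * s₁ * s₂ - a * c * (s₃ ^ 2 + d * s₄ ^ 2) -
      2 * a * b * s₃ * s₄ = 0 := by
  set A := algebraMap F K
  have hli : LinearIndependent F ![1, ρ] := by
    convert bK.linearIndependent
    ext i
    fin_cases i <;> simp [hb0, hb1]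
  have hsquare : ((A s₁ + A s₂ * ρ) ^ 2 - A a * (A s₃ + A s₄ * ρ) ^ 2) * (A b + A c * ρ) =
      A (b * (s₁ ^ 2 - a * s₃ ^ 2) +
          d * (b * (s₂ ^ 2 - a * s₄ ^ 2) + 2 * c * (s₁ * s₂ - a * s₃ * s₄))) +
        A (c * (s₁ ^ 2 + d * s₂ ^ 2) + 2 * b * s₁ * s₂ - a * c * (s₃ ^ 2 + d * s₄ ^ 2) -
          2 * a * b * s₃ * s₄) * ρ := by
    simp only [map_add, map_mul, map_sub, map_pow, map_ofNat]
    linear_combination (A c * (A s₂ ^ 2 - A a * A s₄ ^ 2) * ρ +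
      (A b * (A s₂ ^ 2 - A a * A s₄ ^ 2) +
        A c * (2 * (A s₁ * A s₂ - A a * (A s₃ * A s₄))))) * hρ
  rw [QuaternionAlgebra.sq_smul_j_add_smul_ij, hsquare,
    QuaternionAlgebra.coe_mem_range_algebraMap_iff,
    algebraMap_add_algebraMap_mul_mem_range_iff hli]

/-- let `K = F(ρ)` with `ρ² = d` and `F`-basis `(1, ρ)`, and let
`B = H_K(a, b + cρ)` with `a, b, c ∈ F`. For `s₁, s₂, s₃, s₄ ∈ F`, the square of
`w = (s₁ + s₂ρ)·j + (s₃ + s₄ρ)·(ij)` lies in (the image of) `F` if and only if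
`c(s₁² + ds₂²) + 2bs₁s₂ − ac(s₃² + ds₄²) − 2abs₃s₄ = 0`. -/
theorem square_in_base_iff
    {F K : Type*} [Field F] [Field K] [Algebra F K] (hchar : ringChar F ≠ 2)
    (d : F) (ρ : K) (hρ : ρ ^ 2 = algebraMap F K d)
    (bK : Module.Basis (Fin 2) F K) (hb0 : bK 0 = 1) (hb1 : bK 1 = ρ)
    (a b c : F) (s₁ s₂ s₃ s₄ : F) :
    (((algebraMap F K s₁ + algebraMap F K s₂ * ρ) •
        (⟨0, 0, 1, 0⟩ : ℍ[K, algebraMap F K a, algebraMap F K b + algebraMap F K c * ρ]) +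
      (algebraMap F K s₃ + algebraMap F K s₄ * ρ) •
        ((⟨0, 1, 0, 0⟩ : ℍ[K, algebraMap F K a, algebraMap F K b + algebraMap F K c * ρ]) *
          (⟨0, 0, 1, 0⟩ : ℍ[K, algebraMap F K a,
            algebraMap F K b + algebraMap F K c * ρ]))) ^ 2 ∈
      Set.range (algebraMap F
        ℍ[K, algebraMap F K a, algebraMap F K b + algebraMap F K c * ρ])) ↔
    c * (s₁ ^ 2 + d * s₂ ^ 2) + 2 * b * s₁ * s₂ - a * c * (s₃ ^ 2 + d * s₄ ^ 2) -
      2 * a * b * s₃ * s₄ = 0 :=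
  square_in_base_iff_general d ρ hρ bK hb0 hb1 a b c s₁ s₂ s₃ s₄
end

section
/- Let F = 𝔽_q(t), let K be a field which is an F-algebra of dimension 2 over F, and let A be a K-algebra isomorphic, as a K-algebra, to the algebra of 2×2 matrices over K. Let l ∈ A be an element not in the center of A such that l² = algebraMap F A (e) for some nonzero e ∈ F. Then there exists a nonzero l' ∈ A with l·l' + l'·l = 0 and l'² in the image of algebraMap F A. -/
/-!
Transport `l` to a matrix `m ∈ M₂(K)`. Comparing entries of `m² = e` shows that `tr m · m` is
scalar, so `m`, being non-scalar, is traceless. A traceless `2 × 2` matrix anticommutes with an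
involution `X`: if `m₁₀ ≠ 0`, `X` is `diag(1, -1)` written in the basis `(e₀, m e₀)`; if `m₀₁ ≠ 0`,
transpose; if `m` is diagonal, `X` swaps the two coordinates. Then `l' = φ⁻¹ X` has `l'² = 1`.
-/

namespace Matrix

variable {K : Type*}

theorem trace_eq_zero_of_mul_self_eq_scalar [CommRing K] [NoZeroDivisors K]
    {m : Matrix (Fin 2) (Fin 2) K} {e : K} (hm : m * m = scalar (Fin 2) e)
    (hm_scalar : m ∉ Set.range (scalar (Fin 2))) : m.trace = 0 := by
  rw [trace_fin_two]
  by_contra htr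
  rw [eta_fin_two m, mul_fin_two, scalar_apply, diagonal_fin_two] at hm
  have h00 := congrFun₂ hm 0 0
  have h01 := congrFun₂ hm 0 1
  have h10 := congrFun₂ hm 1 0
  have h11 := congrFun₂ hm 1 1
  simp only [of_apply, cons_val', cons_val_zero, cons_val_one, empty_val', cons_val_fin_one]
    at h00 h01 h10 h11
  have hb : m 0 1 = 0 := (mul_eq_zero.mp (by linear_combination h01)).resolve_right htr
  have hc : m 1 0 = 0 := (mul_eq_zero.mp (by linear_combination h10)).resolve_right htr
  have hd : m 1 1 = m 0 0 := (sub_eq_zero.mp <|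
    (mul_eq_zero.mp (by linear_combination h11 - h00)).resolve_right htr)
  refine hm_scalar ⟨m 0 0, ?_⟩
  rw [scalar_apply, diagonal_fin_two, eta_fin_two m, hb, hc, hd]
  simp

theorem exists_anticommute_mul_self_eq_one_of_apply_one_zero_ne_zero [Field K]
    {m : Matrix (Fin 2) (Fin 2) K} (htr : m.trace = 0) (h10 : m 1 0 ≠ 0) :
    ∃ X : Matrix (Fin 2) (Fin 2) K, m * X + X * m = 0 ∧ X * X = 1 := by
  rw [trace_fin_two] at htr
  refine ⟨!![1, -2 * m 0 0 / m 1 0; 0, -1], ?_, ?_⟩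
  · rw [eta_fin_two m, mul_fin_two, mul_fin_two, ← Matrix.ext_iff]
    intro i j
    fin_cases i <;> fin_cases j <;> simp [h10]
    · ring
    · linear_combination (-2 * m 0 0 / m 1 0) * htr
    · field_simp
      linear_combination -2 * htr
  · rw [mul_fin_two, one_fin_two]
    simp

theorem exists_anticommute_mul_self_eq_one_of_trace_eq_zero [Field K]
    {m : Matrix (Fin 2) (Fin 2) K} (htr : m.trace = 0) :
    ∃ X : Matrix (Fin 2) (Fin 2) K, m * X + X * m = 0 ∧ X * X = 1 := by
  by_cases h10 : m 1 0 ≠ 0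
  · exact exists_anticommute_mul_self_eq_one_of_apply_one_zero_ne_zero htr h10
  by_cases h01 : m 0 1 ≠ 0
  · obtain ⟨X, hanti, hsq⟩ := exists_anticommute_mul_self_eq_one_of_apply_one_zero_ne_zero
      (m := mᵀ) (by rwa [trace_transpose]) h01
    refine ⟨Xᵀ, ?_, ?_⟩
    · rw [← transpose_transpose m, ← transpose_mul, ← transpose_mul, ← transpose_add,
        add_comm, hanti, transpose_zero]
    · rw [← transpose_mul, hsq, transpose_one]
  rw [not_not] at h10 h01
  rw [trace_fin_two] at htr
  refine ⟨!![0, 1; 1, 0], ?_, ?_⟩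
  · rw [eta_fin_two m, mul_fin_two, mul_fin_two, h10, h01, ← Matrix.ext_iff]
    intro i j
    fin_cases i <;> fin_cases j <;> simp [htr, add_comm (m 1 1)]
  · rw [mul_fin_two, one_fin_two]
    simp

end Matrix

open Matrix in
theorem exists_anticommute_mul_self_eq_one_of_mul_self_eq_algebraMap {K A : Type*} [Field K]
    [Ring A] [Algebra K A] (φ : A ≃ₐ[K] Matrix (Fin 2) (Fin 2) K) {l : A}
    (hl : l ∉ Set.center A) {k : K} (hlk : l * l = algebraMap K A k) :
    ∃ l' : A, l * l' + l' * l = 0 ∧ l' * l' = 1 := by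
  have hsq : φ l * φ l = scalar (Fin 2) k := by
    rw [← map_mul, hlk, AlgEquiv.commutes, algebraMap_eq_diagonal, scalar_apply]
    rfl
  have hnc : φ l ∉ Set.range (scalar (Fin 2)) := by
    rwa [← center_eq_range, MulEquivClass.apply_mem_center_iff]
  obtain ⟨X, hanti, hX⟩ := exists_anticommute_mul_self_eq_one_of_trace_eq_zero
    (trace_eq_zero_of_mul_self_eq_scalar hsq hnc)
  refine ⟨φ.symm X, φ.injective ?_, φ.injective ?_⟩ <;> simpa

theorem exists_anticommuting_with_square_in_base_general
    {𝔽 : Type*} [Field 𝔽]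
    (K : Type*) [Field K] [Algebra (RatFunc 𝔽) K]
    (A : Type*) [Ring A] [Algebra K A] [Algebra (RatFunc 𝔽) A]
    [IsScalarTower (RatFunc 𝔽) K A]
    (hA : Nonempty (A ≃ₐ[K] Matrix (Fin 2) (Fin 2) K))
    (l : A) (hl : l ∉ Set.center A)
    (e : RatFunc 𝔽) (hle : l ^ 2 = algebraMap (RatFunc 𝔽) A e) :
    ∃ l' : A, l' ≠ 0 ∧ l * l' + l' * l = 0 ∧
      l' ^ 2 ∈ Set.range (algebraMap (RatFunc 𝔽) A) := by
  obtain ⟨φ⟩ := hA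
  have : Nontrivial A := φ.toEquiv.nontrivial
  obtain ⟨l', hanti, hsq⟩ := exists_anticommute_mul_self_eq_one_of_mul_self_eq_algebraMap φ hl
    (k := algebraMap (RatFunc 𝔽) K e)
    (by rw [← sq, hle, IsScalarTower.algebraMap_apply (RatFunc 𝔽) K A])
  exact ⟨l', left_ne_zero_of_mul_eq_one hsq, hanti, 1, by rw [map_one, sq, hsq]⟩

/-- if `K` is a quadratic extension of `F = 𝔽_q(t)`, `A ≅ M₂(K)` as
`K`-algebras, and `l ∈ A` is non-central with `l² = e ∈ F`, `e ≠ 0`, then there is a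
nonzero `l' ∈ A` anticommuting with `l` whose square also lies in `F`. -/
theorem exists_anticommuting_with_square_in_base
    {𝔽 : Type*} [Field 𝔽] [Fintype 𝔽] (hodd : ringChar 𝔽 ≠ 2)
    (K : Type*) [Field K] [Algebra (RatFunc 𝔽) K]
    (hK : Module.finrank (RatFunc 𝔽) K = 2)
    (A : Type*) [Ring A] [Algebra K A] [Algebra (RatFunc 𝔽) A]
    [IsScalarTower (RatFunc 𝔽) K A]
    (hA : Nonempty (A ≃ₐ[K] Matrix (Fin 2) (Fin 2) K))
    (l : A) (hl : l ∉ Set.center A)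
    (e : RatFunc 𝔽) (he : e ≠ 0) (hle : l ^ 2 = algebraMap (RatFunc 𝔽) A e) :
    ∃ l' : A, l' ≠ 0 ∧ l * l' + l' * l = 0 ∧
      l' ^ 2 ∈ Set.range (algebraMap (RatFunc 𝔽) A) :=
  exists_anticommuting_with_square_in_base_general K A hA l hl e hle
end

section
/- Let F be a field of characteristic different from 2, and let (V₁, h₁) and (V₂, h₂) be n-dimensional F-vector spaces equipped with symmetric bilinear forms that are anisotropic (i.e. hᵢ(v,v) = 0 implies v = 0). Equip V₁ × V₂ with the symmetric bilinear form h((x,y),(x',y')) = h₁(x,x') − h₂(y,y'). Suppose b₁, …, b_{2n} is a basis of V₁ × V₂ such that h(b_{2k−1}, b_{2k}) = 1/2 for every k = 1, …, n, and h(b_r, b_s) = 0 for every other pair of indices r ≤ s (in particular h(b_r, b_r) = 0 for all r). Write b_r = (u_r, v_r) with u_r ∈ V₁ and v_r ∈ V₂. Then u₁, u₃, …, u_{2n−1} form a basis of V₁, v₁, v₃, …, v_{2n−1} form a basis of V₂, and h₁(u_{2i−1}, u_{2j−1}) = h₂(v_{2i−1}, v_{2j−1}) for all i, j; consequently, the linear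 map sending u_{2i−1} to v_{2i−1} is an isometry between (V₁, h₁) and (V₂, h₂). -/
/-!
The vectors `w_i = b_{2i}` (0-based, so the paper's odd-indexed ones) are pairwise orthogonal
for `h = h₁ ⊖ h₂`, so they span a totally isotropic subspace `W` of dimension `n`. An isotropic
vector `(0, y)` satisfies `h₂ y y = 0`, hence is zero by anisotropy of `h₂`; so the projection
`W → V₁` is injective, and likewise `W → V₂`. Counting dimensions, both projections are
isomorphisms, and isotropy of `W` says exactly that the Gram matrices of the two projected bases
coincide.
-/

open Module Submodule

section BilinearSpan

variable {R M N P ι κ : Type*} [CommRing R] [AddCommGroup M] [Module R M]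
  [AddCommGroup N] [Module R N] [AddCommGroup P] [Module R P]

theorem LinearMap.apply_eq_zero_of_mem_span {B : M →ₗ[R] N →ₗ[R] P} {v : ι → M} {w : κ → N}
    (h : ∀ i j, B (v i) (w j) = 0) {x : M} {y : N}
    (hx : x ∈ span R (Set.range v)) (hy : y ∈ span R (Set.range w)) : B x y = 0 := by
  have hxw : ∀ j, B.flip (w j) x = 0 := fun j =>
    LinearMap.eqOn_span (g := 0) (by rintro _ ⟨i, rfl⟩; exact h i j) hx
  exact LinearMap.eqOn_span (g := 0) (by rintro _ ⟨j, rfl⟩; exact hxw j) hy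

end BilinearSpan

section EvenSubfamily

variable {R M : Type*} [CommRing R] [AddCommGroup M] [Module R M]

theorem apply_even_even_eq_zero_of_hyperbolic {n : ℕ} {B : M →ₗ[R] M →ₗ[R] R}
    (hB : ∀ x y, B x y = B y x) {u : Fin (2 * n) → M}
    (hother : ∀ r s : Fin (2 * n), r ≤ s → ¬ ((r : ℕ) % 2 = 0 ∧ (s : ℕ) = (r : ℕ) + 1) →
      B (u r) (u s) = 0)
    (i j : Fin n) : B (u ⟨2 * i, by omega⟩) (u ⟨2 * j, by omega⟩) = 0 := by
  have not_pair : ∀ k l : Fin n, ¬ ((2 * k : ℕ) % 2 = 0 ∧ (2 * l : ℕ) = 2 * k + 1) := by omega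
  rcases le_total i j with hij | hji
  · exact hother _ _ (Fin.mk_le_mk.2 (by omega)) (not_pair i j)
  · rw [hB]
    exact hother _ _ (Fin.mk_le_mk.2 (by omega)) (not_pair j i)

end EvenSubfamily

section ProdSubForm

variable {R V₁ V₂ ι : Type*} [CommRing R] [AddCommGroup V₁] [Module R V₁]
  [AddCommGroup V₂] [Module R V₂]

def prodSubForm (h₁ : V₁ →ₗ[R] V₁ →ₗ[R] R) (h₂ : V₂ →ₗ[R] V₂ →ₗ[R] R) :
    V₁ × V₂ →ₗ[R] V₁ × V₂ →ₗ[R] R :=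
  h₁.compl₁₂ (LinearMap.fst R V₁ V₂) (LinearMap.fst R V₁ V₂) -
    h₂.compl₁₂ (LinearMap.snd R V₁ V₂) (LinearMap.snd R V₁ V₂)

variable {h₁ : V₁ →ₗ[R] V₁ →ₗ[R] R} {h₂ : V₂ →ₗ[R] V₂ →ₗ[R] R}

@[simp]
theorem prodSubForm_apply (p q : V₁ × V₂) : prodSubForm h₁ h₂ p q = h₁ p.1 q.1 - h₂ p.2 q.2 :=
  rfl

theorem prodSubForm_comm (hsymm₁ : ∀ x y, h₁ x y = h₁ y x) (hsymm₂ : ∀ x y, h₂ x y = h₂ y x)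
    (p q : V₁ × V₂) : prodSubForm h₁ h₂ p q = prodSubForm h₁ h₂ q p := by
  simp only [prodSubForm_apply, hsymm₁ p.1, hsymm₂ p.2]

theorem disjoint_ker_fst_of_isotropic (han₂ : ∀ y : V₂, h₂ y y = 0 → y = 0)
    {W : Submodule R (V₁ × V₂)} (hW : ∀ w ∈ W, prodSubForm h₁ h₂ w w = 0) :
    Disjoint W (LinearMap.ker (LinearMap.fst R V₁ V₂)) := by
  rw [disjoint_iff_inf_le]
  rintro ⟨x, y⟩ ⟨hw, hx⟩
  obtain rfl : x = 0 := hx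
  have hy : h₂ y y = 0 := by simpa using hW _ hw
  simp [han₂ y hy]

theorem disjoint_ker_snd_of_isotropic (han₁ : ∀ x : V₁, h₁ x x = 0 → x = 0)
    {W : Submodule R (V₁ × V₂)} (hW : ∀ w ∈ W, prodSubForm h₁ h₂ w w = 0) :
    Disjoint W (LinearMap.ker (LinearMap.snd R V₁ V₂)) := by
  rw [disjoint_iff_inf_le]
  rintro ⟨x, y⟩ ⟨hw, hy⟩
  obtain rfl : y = 0 := hy
  have hx : h₁ x x = 0 := by simpa using hW _ hw
  simp [han₁ x hx]

theorem linearIndependent_fst_of_isotropic {v : ι → V₁ × V₂} (hv : LinearIndependent R v)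
    (hiso : ∀ i j, prodSubForm h₁ h₂ (v i) (v j) = 0) (han₂ : ∀ y : V₂, h₂ y y = 0 → y = 0) :
    LinearIndependent R (fun i => (v i).1) :=
  hv.map (disjoint_ker_fst_of_isotropic han₂ fun _ hw =>
    LinearMap.apply_eq_zero_of_mem_span hiso hw hw)

theorem linearIndependent_snd_of_isotropic {v : ι → V₁ × V₂} (hv : LinearIndependent R v)
    (hiso : ∀ i j, prodSubForm h₁ h₂ (v i) (v j) = 0) (han₁ : ∀ x : V₁, h₁ x x = 0 → x = 0) :
    LinearIndependent R (fun i => (v i).2) :=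
  hv.map (disjoint_ker_snd_of_isotropic han₁ fun _ hw =>
    LinearMap.apply_eq_zero_of_mem_span hiso hw hw)

end ProdSubForm

theorem Module.Basis.apply_equiv_apply_equiv_of_gram_eq {R V₁ V₂ ι : Type*} [CommRing R]
    [AddCommGroup V₁] [Module R V₁] [AddCommGroup V₂] [Module R V₂]
    {h₁ : V₁ →ₗ[R] V₁ →ₗ[R] R} {h₂ : V₂ →ₗ[R] V₂ →ₗ[R] R} (B₁ : Basis ι R V₁) (B₂ : Basis ι R V₂)
    (hgram : ∀ i j, h₁ (B₁ i) (B₁ j) = h₂ (B₂ i) (B₂ j)) (x y : V₁) :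
    h₂ (B₁.equiv B₂ (Equiv.refl ι) x) (B₁.equiv B₂ (Equiv.refl ι) y) = h₁ x y := by
  have hcomp : h₂.compl₁₂ (B₁.equiv B₂ (Equiv.refl ι) : V₁ →ₗ[R] V₂)
      (B₁.equiv B₂ (Equiv.refl ι) : V₁ →ₗ[R] V₂) = h₁ :=
    LinearMap.ext_basis B₁ B₁ fun i j => by simp [hgram]
  exact LinearMap.congr_fun₂ hcomp x y

/-- given anisotropic symmetric bilinear spaces `(V₁,h₁)`, `(V₂,h₂)` of
dimension `n` over a field of characteristic `≠ 2`, and a hyperbolic basis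
`b₁, …, b_{2n}` of `V₁ × V₂` for the form `h = h₁ ⊖ h₂` (consecutive pairs pairing to
`1/2`, all other pairs orthogonal), the first components of the odd-indexed basis
vectors form a basis of `V₁`, the second components form a basis of `V₂`, the two Gram
matrices agree, and the induced map is an isometry `(V₁,h₁) ≃ (V₂,h₂)`. -/
theorem isometry_from_hyperbolic_basis
    {F : Type*} [Field F]
    {V₁ V₂ : Type*} [AddCommGroup V₁] [Module F V₁] [AddCommGroup V₂] [Module F V₂]
    (n : ℕ)
    (h₁ : V₁ →ₗ[F] V₁ →ₗ[F] F) (h₂ : V₂ →ₗ[F] V₂ →ₗ[F] F)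
    (hsymm₁ : ∀ x y, h₁ x y = h₁ y x) (hsymm₂ : ∀ x y, h₂ x y = h₂ y x)
    (han₁ : ∀ v : V₁, h₁ v v = 0 → v = 0) (han₂ : ∀ v : V₂, h₂ v v = 0 → v = 0)
    (hdim₁ : Module.finrank F V₁ = n) (hdim₂ : Module.finrank F V₂ = n)
    (b : Module.Basis (Fin (2 * n)) F (V₁ × V₂))
    (hother : ∀ r s : Fin (2 * n), r ≤ s → ¬ ((r : ℕ) % 2 = 0 ∧ (s : ℕ) = (r : ℕ) + 1) →
      h₁ (b r).1 (b s).1 - h₂ (b r).2 (b s).2 = 0) :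
    (LinearIndependent F (fun i : Fin n => (b ⟨2 * i, by have := i.2; omega⟩).1) ∧
      Submodule.span F
        (Set.range (fun i : Fin n => (b ⟨2 * i, by have := i.2; omega⟩).1)) = ⊤) ∧
    (LinearIndependent F (fun i : Fin n => (b ⟨2 * i, by have := i.2; omega⟩).2) ∧
      Submodule.span F
        (Set.range (fun i : Fin n => (b ⟨2 * i, by have := i.2; omega⟩).2)) = ⊤) ∧
    (∀ i j : Fin n,
      h₁ (b ⟨2 * i, by have := i.2; omega⟩).1 (b ⟨2 * j, by have := j.2; omega⟩).1 =
      h₂ (b ⟨2 * i, by have := i.2; omega⟩).2 (b ⟨2 * j, by have := j.2; omega⟩).2) ∧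
    ∃ φ : V₁ ≃ₗ[F] V₂,
      (∀ i : Fin n,
        φ (b ⟨2 * i, by have := i.2; omega⟩).1 = (b ⟨2 * i, by have := i.2; omega⟩).2) ∧
      ∀ x y : V₁, h₂ (φ x) (φ y) = h₁ x y := by
  have : Module.Finite F (V₁ × V₂) := Module.Finite.of_basis b
  have : FiniteDimensional F V₁ := .of_surjective (LinearMap.fst F V₁ V₂) Prod.fst_surjective
  have : FiniteDimensional F V₂ := .of_surjective (LinearMap.snd F V₁ V₂) Prod.snd_surjective
  let e : Fin n → Fin (2 * n) := fun i => ⟨2 * i, by omega⟩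
  have he : Function.Injective e := fun i j hij => by
    have := congrArg Fin.val hij; simp only [e] at this; ext; omega
  have hiso : ∀ i j, prodSubForm h₁ h₂ (b (e i)) (b (e j)) = 0 :=
    apply_even_even_eq_zero_of_hyperbolic (prodSubForm_comm hsymm₁ hsymm₂)
      (fun r s hrs hr => by simpa using hother r s hrs hr)
  have hli := b.linearIndependent.comp e he
  have hli₁ := linearIndependent_fst_of_isotropic hli hiso han₂
  have hli₂ := linearIndependent_snd_of_isotropic hli hiso han₁
  have hcard₁ : Fintype.card (Fin n) = finrank F V₁ := by simp [hdim₁]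
  have hcard₂ : Fintype.card (Fin n) = finrank F V₂ := by simp [hdim₂]
  have hgram : ∀ i j, h₁ (b (e i)).1 (b (e j)).1 = h₂ (b (e i)).2 (b (e j)).2 := fun i j =>
    sub_eq_zero.1 (hiso i j)
  let B₁ := basisOfLinearIndependentOfCardEqFinrank' _ hli₁ hcard₁
  let B₂ := basisOfLinearIndependentOfCardEqFinrank' _ hli₂ hcard₂
  refine ⟨⟨hli₁, hli₁.span_eq_top_of_card_eq_finrank' hcard₁⟩,
    ⟨hli₂, hli₂.span_eq_top_of_card_eq_finrank' hcard₂⟩, hgram, B₁.equiv B₂ (Equiv.refl _),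
    fun i => by simpa [B₁, B₂] using B₁.equiv_apply i B₂ (Equiv.refl _), ?_⟩
  exact B₁.apply_equiv_apply_equiv_of_gram_eq B₂ (by simpa [B₁, B₂] using hgram)
end
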